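/- arXiv:2106.12705 — 6 statements merged into one kernel-verified Lean document; each statement's English description precedes it below -/
import Mathlib

section
/- Let X ⊆ ℝ^m be a nonempty compact convex set, let c : X × X → ℝ be a valid cost function, let γ > 0, and let P ⊆ X be a closed set (the positively classified region of a binary classifier). For any x ∈ X, if x* ∈ X maximizes the utility x' ↦ γ·1{x' ∈ P} − c(x, x') over X, then either x* = x or x* lies on the topological frontier of P. -/
open Set Filter Topology

/-- A utility-maximizing agent (standard microfoundations) either does not
move, or moves exactly to the decision boundary (topological frontier) of the positively
classified region. -/
theorem stmt0 {m : ℕ} (X : Set (EuclideanSpace ℝ (Fin m)))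
    (hXne : X.Nonempty) (hXcomp : IsCompact X) (hXconv : Convex ℝ X)
    (c : EuclideanSpace ℝ (Fin m) → EuclideanSpace ℝ (Fin m) → ℝ)
    (hc_cont : ContinuousOn (fun p => c p.1 p.2) (X ×ˢ X))
    (hc_zero : ∀ x ∈ X, c x x = 0)
    (hc_between : ∀ x ∈ X, ∀ x' ∈ X, ∀ z ∈ X,
      z ∈ openSegment ℝ x x' → z ≠ x → z ≠ x' → c x z < c x x' ∧ c z x < c x' x)
    (γ : ℝ) (hγ : 0 < γ)
    (P : Set (EuclideanSpace ℝ (Fin m))) (hPclosed : IsClosed P) (hPX : P ⊆ X)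
    (x : EuclideanSpace ℝ (Fin m)) (hx : x ∈ X)
    (xstar : EuclideanSpace ℝ (Fin m)) (hxstar : xstar ∈ X)
    (hmax : ∀ x' ∈ X,
      P.indicator (fun _ => γ) x' - c x x' ≤ P.indicator (fun _ => γ) xstar - c x xstar) :
    xstar = x ∨ xstar ∈ frontier P := by
  by_cases hxx : xstar = x
  · exact Or.inl hxx
  right
  -- basic facts about segment points
  have hzX : ∀ (y : EuclideanSpace ℝ (Fin m)), y ∈ X → ∀ t ∈ Icc (0:ℝ) 1,
      (1 - t) • x + t • y ∈ X := by
    intro y hy t ht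
    exact hXconv hx hy (by linarith [ht.2]) ht.1 (by ring)
  have hzseg : ∀ (y : EuclideanSpace ℝ (Fin m)), ∀ t ∈ Ioo (0:ℝ) 1,
      (1 - t) • x + t • y ∈ openSegment ℝ x y := by
    intro y t ht
    exact ⟨1 - t, t, by linarith [ht.2], ht.1, by ring, rfl⟩
  have hzne : ∀ (y : EuclideanSpace ℝ (Fin m)), y ≠ x → ∀ t ∈ Ioo (0:ℝ) 1,
      (1 - t) • x + t • y ≠ x ∧ (1 - t) • x + t • y ≠ y := by
    intro y hy t ht
    constructor
    · intro h
      apply hy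
      have h2 : t • (y - x) = 0 := by
        have h3 : ((1 : ℝ) - t) • x + t • y - x = 0 := sub_eq_zero.mpr h
        rw [← h3]; module
      rcases smul_eq_zero.mp h2 with h4 | h4
      · exact absurd h4 ht.1.ne'
      · exact (sub_eq_zero.mp h4)
    · intro h
      apply hy
      have h2 : (1 - t) • (x - y) = 0 := by
        have h3 : ((1 : ℝ) - t) • x + t • y - y = 0 := sub_eq_zero.mpr h
        rw [← h3]; module
      rcases smul_eq_zero.mp h2 with h4 | h4
      · exact absurd (by linarith : t = 1) ht.2.ne
      · exact (sub_eq_zero.mp h4).symm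
  have hIoo : (𝓝[Ioo (0:ℝ) 1] 0).NeBot := by
    rw [← mem_closure_iff_nhdsWithin_neBot, closure_Ioo one_ne_zero.symm]
    exact ⟨le_refl 0, zero_le_one⟩
  -- nonnegativity of c x ·
  have hnonneg : ∀ y ∈ X, 0 ≤ c x y := by
    intro y hy
    rcases eq_or_ne y x with rfl | hne
    · exact (hc_zero y hy).ge
    have hmap : MapsTo (fun t : ℝ => (x, (1 - t) • x + t • y)) (Icc 0 1) (X ×ˢ X) :=
      fun t ht => ⟨hx, hzX y hy t ht⟩
    have hf : ContinuousOn (fun t : ℝ => (x, (1 - t) • x + t • y)) (Icc 0 1) :=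
      (continuous_const.prodMk
        (((continuous_const.sub continuous_id).smul continuous_const).add
          (continuous_id.smul continuous_const))).continuousOn
    have hcont : ContinuousWithinAt (fun t : ℝ => c x ((1 - t) • x + t • y)) (Icc 0 1) 0 :=
      (hc_cont.comp hf hmap).continuousWithinAt (left_mem_Icc.mpr zero_le_one)
    have h0 : (fun t : ℝ => c x ((1 - t) • x + t • y)) 0 = 0 := by
      simp [hc_zero x hx]
    have htend : Tendsto (fun t : ℝ => c x ((1 - t) • x + t • y)) (𝓝[Ioo 0 1] 0) (𝓝 0) := by
      have h := hcont.tendsto.mono_left (nhdsWithin_mono (0:ℝ) Ioo_subset_Icc_self)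
      simpa [hc_zero x hx] using h
    refine le_of_tendsto htend ?_
    filter_upwards [self_mem_nhdsWithin] with t ht
    have hz := hzne y hne t ht
    exact (hc_between x hx y hy _ (hzX y hy t (Ioo_subset_Icc_self ht))
      (hzseg y t ht) hz.1 hz.2).1.le
  -- positivity of c x xstar
  have hpos : 0 < c x xstar := by
    have hm : ((1:ℝ) - 1/2) • x + (1/2 : ℝ) • xstar ∈ X :=
      hzX xstar hxstar (1/2) ⟨by norm_num, by norm_num⟩
    have hz := hzne xstar hxx (1/2) ⟨by norm_num, by norm_num⟩
    have := (hc_between x hx xstar hxstar _ hm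
      (hzseg xstar (1/2) ⟨by norm_num, by norm_num⟩) hz.1 hz.2).1
    have := hnonneg _ hm
    linarith
  -- xstar ∈ P
  have hxP : xstar ∈ P := by
    by_contra hnP
    have h1 := hmax x hx
    rw [hc_zero x hx, Set.indicator_of_notMem hnP] at h1
    have h2 : 0 ≤ P.indicator (fun _ => γ) x := Set.indicator_nonneg (fun _ _ => hγ.le) x
    linarith
  -- xstar ∉ interior P
  have hnint : xstar ∉ interior P := by
    intro hint
    have hcont1 : ContinuousAt (fun t : ℝ => (1 - t) • x + t • xstar) 1 :=
      (((continuous_const.sub continuous_id).smul continuous_const).add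
        (continuous_id.smul continuous_const)).continuousAt
    have hev : ∀ᶠ t : ℝ in 𝓝 1, (1 - t) • x + t • xstar ∈ interior P := by
      apply hcont1.eventually_mem (isOpen_interior.mem_nhds ?_)
      simpa using hint
    haveI hne1 : (𝓝[Ioo (0:ℝ) 1] 1).NeBot := by
      rw [← mem_closure_iff_nhdsWithin_neBot, closure_Ioo one_ne_zero.symm]
      exact ⟨zero_le_one, le_refl 1⟩
    obtain ⟨t, htP, ht⟩ :=
      ((hev.filter_mono (nhdsWithin_le_nhds (s := Ioo (0:ℝ) 1))).and self_mem_nhdsWithin).exists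
    set z := (1 - t) • x + t • xstar with hzdef
    have hzX' : z ∈ X := hzX xstar hxstar t (Ioo_subset_Icc_self ht)
    have hzne' := hzne xstar hxx t ht
    have hlt := (hc_between x hx xstar hxstar z hzX'
      (hzseg xstar t ht) hzne'.1 hzne'.2).1
    have h1 := hmax z hzX'
    rw [Set.indicator_of_mem hxP, Set.indicator_of_mem (interior_subset htP)] at h1
    linarith
  rw [hPclosed.frontier_eq]
  exact ⟨hxP, hnint⟩
end

section
/- Let X ⊆ ℝ^m be a nonempty compact convex set, let c : X × X → ℝ be a valid cost function, let γ > 0, and let P ⊆ X be closed with topological frontier ∂P. Let μ₀ be a probability measure on X × {0,1} with μ₀(∂P × {0,1}) = 0. Let R : X → X be a measurable map such that for every x ∈ X, R(x) maximizes x' ↦ γ·1{x' ∈ P} − c(x, x') over X, and let ν be the pushforward of μ₀ under (x,y) ↦ (R(x), y). Then either ν = μ₀, or ν(∂P × {0,1}) > 0; in particular, if ν ≠ μ₀ then ν assigns positive mass to a μ₀-null set and hence is not absolutely continuous with respect to μ₀. -/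
/-!
If `R x ≠ x`, every point `z` strictly between `x` and `R x` is strictly cheaper to reach than
`R x`, so optimality of `R x` forces the reward at `z` to be strictly smaller than at `R x`:
`R x ∈ P` while the whole open segment misses `P`. Hence `R x` lies in `P` and in the closure
of `Pᶜ`, i.e. on `frontier P`. So `R` only moves points onto the frontier; if `ν` gives the
frontier no mass, then `R` is the identity `μ₀`-a.e. and `ν = μ₀`.
-/

open Set MeasureTheory

lemma indicator_const_lt_indicator_const_iff {α : Type*} {P : Set α} {γ : ℝ} (hγ : 0 < γ)
    {a b : α} :
    P.indicator (fun _ => γ) a < P.indicator (fun _ => γ) b ↔ a ∉ P ∧ b ∈ P := by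
  by_cases ha : a ∈ P <;> by_cases hb : b ∈ P <;> simp [ha, hb, hγ, hγ.le]

lemma mem_frontier_of_maximizes_indicator_sub_cost {E : Type*} [AddCommGroup E] [Module ℝ E]
    [TopologicalSpace E] [ContinuousAdd E] [ContinuousSMul ℝ E]
    {X P : Set E} (hX : Convex ℝ X) {c : E → E → ℝ} {γ : ℝ} (hγ : 0 < γ)
    {x y : E} (hx : x ∈ X) (hy : y ∈ X)
    (hcost : ∀ z ∈ openSegment ℝ x y, c x z < c x y)
    (hmax : ∀ z ∈ X,
      P.indicator (fun _ => γ) z - c x z ≤ P.indicator (fun _ => γ) y - c x y) :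
    y ∈ frontier P := by
  have hsegment : ∀ z ∈ openSegment ℝ x y, z ∉ P ∧ y ∈ P := fun z hz => by
    rw [← indicator_const_lt_indicator_const_iff hγ]
    linarith [hcost z hz, hmax z (hX.openSegment_subset hx hy hz)]
  have hy_closure : y ∈ closure (openSegment ℝ x y) :=
    segment_subset_closure_openSegment (right_mem_segment ℝ x y)
  obtain ⟨z, hz⟩ := closure_nonempty_iff.1 ⟨y, hy_closure⟩
  rw [frontier_eq_closure_inter_closure]
  exact ⟨subset_closure (hsegment z hz).2,
    closure_mono (fun w hw => (hsegment w hw).1) hy_closure⟩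

lemma Measure.map_eq_self_or_map_pos_of_ae_mem {α : Type*} [MeasurableSpace α] {μ : Measure α}
    {f : α → α} (hf : Measurable f) {B : Set α} (hB : MeasurableSet B)
    (hmoved : ∀ᵐ p ∂μ, f p ≠ p → f p ∈ B) : μ.map f = μ ∨ 0 < μ.map f B := by
  refine or_iff_not_imp_right.2 fun hB_null => ?_
  rw [not_lt, nonpos_iff_eq_zero, Measure.map_apply hf hB,
    measure_eq_zero_iff_ae_notMem] at hB_null
  have hfix : f =ᵐ[μ] id := by
    filter_upwards [hmoved, hB_null] with p hp hpB
    exact not_not.1 (mt hp hpB)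
  rw [Measure.map_congr hfix, Measure.map_id]

theorem stmt1_general {m : ℕ} (X : Set (EuclideanSpace ℝ (Fin m)))
    (hXconv : Convex ℝ X)
    (c : EuclideanSpace ℝ (Fin m) → EuclideanSpace ℝ (Fin m) → ℝ)
    (hc_between : ∀ x ∈ X, ∀ x' ∈ X, ∀ z ∈ X,
      z ∈ openSegment ℝ x x' → z ≠ x → z ≠ x' → c x z < c x x' ∧ c z x < c x' x)
    (γ : ℝ) (hγ : 0 < γ)
    (P : Set (EuclideanSpace ℝ (Fin m)))
    (μ₀ : Measure (EuclideanSpace ℝ (Fin m) × Bool))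
    (hμ₀X : μ₀ ((X ×ˢ (univ : Set Bool))ᶜ) = 0)
    (hmu0frontier : μ₀ (frontier P ×ˢ (univ : Set Bool)) = 0)
    (R : EuclideanSpace ℝ (Fin m) → EuclideanSpace ℝ (Fin m))
    (hRmeas : Measurable R)
    (hRX : ∀ x ∈ X, R x ∈ X)
    (hRmax : ∀ x ∈ X, ∀ x' ∈ X,
      P.indicator (fun _ => γ) x' - c x x' ≤ P.indicator (fun _ => γ) (R x) - c x (R x))
    (ν : Measure (EuclideanSpace ℝ (Fin m) × Bool))
    (hν : ν = Measure.map (fun p => (R p.1, p.2)) μ₀) :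
    (ν = μ₀ ∨ 0 < ν (frontier P ×ˢ (univ : Set Bool))) ∧
      (ν ≠ μ₀ → ¬ ν.AbsolutelyContinuous μ₀) := by
  have hmoved : ∀ x ∈ X, R x ≠ x → R x ∈ frontier P := fun x hx hne =>
    mem_frontier_of_maximizes_indicator_sub_cost hXconv hγ hx (hRX x hx)
      (fun z hz => (hc_between x hx _ (hRX x hx) z (hXconv.openSegment_subset hx (hRX x hx) hz) hz
        (fun h => hne (left_mem_openSegment_iff.1 (by rwa [h] at hz)).symm)
        (fun h => hne (right_mem_openSegment_iff.1 (by rwa [h] at hz)).symm)).1)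
      (hRmax x hx)
  have hdichotomy : ν = μ₀ ∨ 0 < ν (frontier P ×ˢ (univ : Set Bool)) := by
    subst hν
    refine Measure.map_eq_self_or_map_pos_of_ae_mem
      ((hRmeas.comp measurable_fst).prodMk measurable_snd)
      (isClosed_frontier.measurableSet.prod MeasurableSet.univ) ?_
    filter_upwards [mem_ae_iff.2 hμ₀X] with p hp hne
    exact ⟨hmoved p.1 hp.1 fun h => hne (Prod.ext h rfl), mem_univ _⟩
  refine ⟨hdichotomy, fun hne hac => ?_⟩
  have hpos := hdichotomy.resolve_left hne
  rw [hac hmu0frontier] at hpos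
  exact lt_irrefl _ hpos

/-- Proposition 1 (degeneracy of the aggregate response under standard
microfoundations). The pushforward of the base distribution under the best-response map
of rational agents either equals the base distribution, or puts positive mass on the
decision boundary; in the latter case it is not absolutely continuous w.r.t. the base. -/
theorem stmt1 {m : ℕ} (X : Set (EuclideanSpace ℝ (Fin m)))
    (hXne : X.Nonempty) (hXcomp : IsCompact X) (hXconv : Convex ℝ X)
    (c : EuclideanSpace ℝ (Fin m) → EuclideanSpace ℝ (Fin m) → ℝ)
    (hc_cont : ContinuousOn (fun p => c p.1 p.2) (X ×ˢ X))
    (hc_zero : ∀ x ∈ X, c x x = 0)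
    (hc_between : ∀ x ∈ X, ∀ x' ∈ X, ∀ z ∈ X,
      z ∈ openSegment ℝ x x' → z ≠ x → z ≠ x' → c x z < c x x' ∧ c z x < c x' x)
    (γ : ℝ) (hγ : 0 < γ)
    (P : Set (EuclideanSpace ℝ (Fin m))) (hPclosed : IsClosed P) (hPX : P ⊆ X)
    (μ₀ : Measure (EuclideanSpace ℝ (Fin m) × Bool)) [IsProbabilityMeasure μ₀]
    (hμ₀X : μ₀ ((X ×ˢ (univ : Set Bool))ᶜ) = 0)
    (hmu0frontier : μ₀ (frontier P ×ˢ (univ : Set Bool)) = 0)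
    (R : EuclideanSpace ℝ (Fin m) → EuclideanSpace ℝ (Fin m))
    (hRmeas : Measurable R)
    (hRX : ∀ x ∈ X, R x ∈ X)
    (hRmax : ∀ x ∈ X, ∀ x' ∈ X,
      P.indicator (fun _ => γ) x' - c x x' ≤ P.indicator (fun _ => γ) (R x) - c x (R x))
    (ν : Measure (EuclideanSpace ℝ (Fin m) × Bool))
    (hν : ν = Measure.map (fun p => (R p.1, p.2)) μ₀) :
    (ν = μ₀ ∨ 0 < ν (frontier P ×ˢ (univ : Set Bool))) ∧
      (ν ≠ μ₀ → ¬ ν.AbsolutelyContinuous μ₀) :=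
  stmt1_general X hXconv c hc_between γ hγ P μ₀ hμ₀X hmu0frontier R hRmeas hRX hRmax ν hν
end

section
/- In the 1-dimensional Setup, suppose additionally that there exists θ ∈ [a,b] with θ > θ_SL and c(θ_SL, θ) = 1. Then there is a unique θ₀ ∈ (a,b] with Γ(θ₀) = 1/2; it satisfies θ₀ > θ_SL and c(θ_SL, θ₀) ≤ 1; and a point θ ∈ [a,b] is locally stable for L_0 (the case p = 0, in which all agents follow standard microfoundations) if and only if θ ∈ [θ₀, b]. In particular, locally stable points exist when p = 0. -/
open MeasureTheory Set

/-- Best response of an agent with features `x` to the threshold classifier `1{· ≥ θ}`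
under a cost function `c` with utility `γ = 1` for positive classification. -/
noncomputable def bestResponse (c : ℝ → ℝ → ℝ) (θ x : ℝ) : ℝ :=
  if θ ≤ x then x else if c x θ ≤ 1 then θ else x

/-- Risk of the threshold `θ'` on the base (non-strategic) population. -/
noncomputable def nonStrategicRisk (β : Measure ℝ) (μ : ℝ → ℝ) (θ' : ℝ) : ℝ :=
  ∫ x, (if θ' ≤ x then 1 - μ x else μ x) ∂β

/-- Decoupled performative risk of the threshold `θ'` on the distribution induced by
deploying `θ` against agents following standard microfoundations. -/
noncomputable def smRisk (β : Measure ℝ) (μ : ℝ → ℝ) (c : ℝ → ℝ → ℝ) (θ θ' : ℝ) : ℝ :=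
  ∫ x, (if θ' ≤ bestResponse c θ x then 1 - μ x else μ x) ∂β

/-- Decoupled performative risk for a mixture of a `p` fraction of non-strategic agents
and a `1 - p` fraction of agents following standard microfoundations. -/
noncomputable def mixRisk (β : Measure ℝ) (μ : ℝ → ℝ) (c : ℝ → ℝ → ℝ) (p θ θ' : ℝ) : ℝ :=
  p * nonStrategicRisk β μ θ' + (1 - p) * smRisk β μ c θ θ'

/-- `θ` is locally (performatively) stable: it is a local minimum on `[a,b]` of the
decoupled performative risk `θ' ↦ L_p(θ, θ')`, or that map is differentiable at `θ`
with derivative `0`. -/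
def LocallyStable (β : Measure ℝ) (μ : ℝ → ℝ) (c : ℝ → ℝ → ℝ) (a b p θ : ℝ) : Prop :=
  IsLocalMinOn (fun θ' => mixRisk β μ c p θ θ') (Icc a b) θ ∨
    HasDerivAt (fun θ' => mixRisk β μ c p θ θ') 0 θ

/-- The set of agents who game to the threshold `θ`. -/
def Qset (c : ℝ → ℝ → ℝ) (a b θ : ℝ) : Set ℝ := {x | x ∈ Icc a b ∧ x < θ ∧ c x θ ≤ 1}

/-- Average of `μ` over the gaming set `Q(θ)`. -/
noncomputable def Gam (β : Measure ℝ) (μ : ℝ → ℝ) (c : ℝ → ℝ → ℝ) (a b θ : ℝ) : ℝ :=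
  (∫ x in Qset c a b θ, μ x ∂β) / (β (Qset c a b θ)).toReal

/-!
The gaming set is an interval `Q(θ) = [q(θ), θ)` whose floor `q` is continuous and
nondecreasing, so `Γ(θ)` is the `β`-average of `μ` over `[q(θ), θ)`. Averages of the strictly
increasing `μ` grow when the interval moves to the right, so `Γ` is continuous and strictly
increasing. Moreover `Γ(θ_SL) < μ(θ_SL) = 1/2`, while at the point `θ'` with `c(θ_SL, θ') = 1`
the floor is `q(θ') = θ_SL`, so `Γ(θ') > 1/2`; the intermediate value theorem gives `θ₀`.

When all agents are strategic, moving the threshold from `θ` to `t ∈ (q(θ), θ]` leaves the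
risk unchanged, while for `t > θ` it changes it by
`∫_{[q(θ), t)} (2μ - 1) dβ = β[q(θ), t) · (2 · average - 1)`. If `Γ(θ) ≥ 1/2` this is
nonnegative and `θ` is a local minimum. If `Γ(θ) < 1/2` the risk jumps down just right of `θ`;
at `θ = a` there is no jump, but `μ < 1/2` near `a` and the density is bounded below, so the
risk decreases at a linear rate. Either way `θ` is neither a local minimum nor a critical point.
-/

open Filter Topology

structure IsValidCost (c : ℝ → ℝ → ℝ) : Prop where
  continuous : Continuous fun p : ℝ × ℝ => c p.1 p.2
  apply_self : ∀ x, c x x = 0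
  lt_of_between : ∀ x xP z : ℝ, min x xP < z → z < max x xP →
    c x z < c x xP ∧ c z x < c xP x

namespace IsValidCost

variable {c : ℝ → ℝ → ℝ}

theorem source_between (hc : IsValidCost c) {z y θ : ℝ} (hzy : z < y) (hyθ : y < θ) :
    c y θ < c z θ :=
  (hc.lt_of_between θ z y (by simpa [min_eq_right (hzy.trans hyθ).le])
    (by simpa [max_eq_left (hzy.trans hyθ).le])).2

theorem target_between (hc : IsValidCost c) {y t θ : ℝ} (hyt : y < t) (htθ : t < θ) :
    c y t < c y θ :=
  (hc.lt_of_between y θ t (by simpa [min_eq_left (hyt.trans htθ).le])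
    (by simpa [max_eq_right (hyt.trans htθ).le])).1

theorem continuous_left (hc : IsValidCost c) (θ : ℝ) : Continuous fun x => c x θ :=
  hc.continuous.comp (continuous_id.prodMk continuous_const)

theorem continuous_right (hc : IsValidCost c) (x : ℝ) : Continuous fun θ => c x θ :=
  hc.continuous.comp (continuous_const.prodMk continuous_id)

end IsValidCost

noncomputable def gamingFloor (c : ℝ → ℝ → ℝ) (a θ : ℝ) : ℝ :=
  sInf {x | x ∈ Icc a θ ∧ c x θ ≤ 1}

section gamingFloor

variable {c : ℝ → ℝ → ℝ} {a θ : ℝ}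

theorem setOf_cost_le_one_eq_Icc (hc : IsValidCost c) (hθ : a ≤ θ) :
    {x | x ∈ Icc a θ ∧ c x θ ≤ 1} = Icc (gamingFloor c a θ) θ := by
  set S := {x | x ∈ Icc a θ ∧ c x θ ≤ 1}
  have hθS : θ ∈ S := ⟨⟨hθ, le_rfl⟩, by simp [hc.apply_self]⟩
  have hbdd : BddBelow S := ⟨a, fun x hx => hx.1.1⟩
  have hclosed : IsClosed S :=
    isClosed_Icc.inter (isClosed_le (hc.continuous_left θ) continuous_const)
  have hq : gamingFloor c a θ ∈ S := hclosed.csInf_mem ⟨θ, hθS⟩ hbdd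
  refine Subset.antisymm (fun x hx => ⟨csInf_le hbdd hx, hx.1.2⟩) fun x hx => ?_
  refine ⟨⟨hq.1.1.trans hx.1, hx.2⟩, ?_⟩
  rcases hx.1.eq_or_lt with h | hqx
  · exact h ▸ hq.2
  rcases hx.2.eq_or_lt with h | hxθ
  · exact h ▸ hθS.2
  exact (hc.source_between hqx hxθ).le.trans hq.2

theorem mem_Icc_gamingFloor_iff (hc : IsValidCost c) (hθ : a ≤ θ) {x : ℝ} :
    x ∈ Icc (gamingFloor c a θ) θ ↔ x ∈ Icc a θ ∧ c x θ ≤ 1 := by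
  rw [← setOf_cost_le_one_eq_Icc hc hθ]; rfl

theorem gamingFloor_mem_Icc (hc : IsValidCost c) (hθ : a ≤ θ) :
    gamingFloor c a θ ∈ Icc a θ := by
  have hθmem := (mem_Icc_gamingFloor_iff hc hθ).2 ⟨⟨hθ, le_rfl⟩, by simp [hc.apply_self]⟩
  exact ((mem_Icc_gamingFloor_iff hc hθ).1 ⟨le_rfl, hθmem.1⟩).1

theorem cost_gamingFloor_le_one (hc : IsValidCost c) (hθ : a ≤ θ) : c (gamingFloor c a θ) θ ≤ 1 :=
  ((mem_Icc_gamingFloor_iff hc hθ).1 ⟨le_rfl, (gamingFloor_mem_Icc hc hθ).2⟩).2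

theorem gamingFloor_lt (hc : IsValidCost c) (hθ : a < θ) : gamingFloor c a θ < θ := by
  have hnear : ∀ᶠ x in 𝓝[<] θ, x ∈ Ioo a θ ∧ c x θ < 1 :=
    (show ∀ᶠ x in 𝓝[<] θ, x ∈ Ioo a θ from Ioo_mem_nhdsLT hθ).and <| nhdsWithin_le_nhds <|
      (hc.continuous_left θ).continuousAt.eventually_lt continuousAt_const (by simp [hc.apply_self])
  obtain ⟨x, hx, hcx⟩ := hnear.exists
  exact ((mem_Icc_gamingFloor_iff hc hθ.le).2 ⟨⟨hx.1.le, hx.2.le⟩, hcx.le⟩).1.trans_lt hx.2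

theorem gamingFloor_mono (hc : IsValidCost c) : MonotoneOn (gamingFloor c a) (Ici a) := by
  intro θ hθ θ' hθ' hθθ'
  rcases hθθ'.eq_or_lt with rfl | hlt
  · exact le_rfl
  rcases le_or_gt θ (gamingFloor c a θ') with h | h
  · exact (gamingFloor_mem_Icc hc hθ).2.trans h
  exact ((mem_Icc_gamingFloor_iff hc hθ).2 ⟨⟨(gamingFloor_mem_Icc hc hθ').1, h.le⟩,
    (hc.target_between h hlt).le.trans (cost_gamingFloor_le_one hc hθ')⟩).1

theorem continuousOn_gamingFloor (hc : IsValidCost c) : ContinuousOn (gamingFloor c a) (Ioi a) := by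
  intro θ (hθ : a < θ)
  have hqθ := gamingFloor_lt hc hθ
  refine tendsto_order.2 ⟨fun l hl => ?_, fun u hu => ?_⟩
  · rcases lt_or_ge l a with hla | hal
    · filter_upwards [self_mem_nhdsWithin] with θ' (hθ' : a < θ')
      exact hla.trans_le (gamingFloor_mem_Icc hc hθ'.le).1
    have hcl : 1 < c l θ := by
      by_contra! h
      exact hl.not_ge ((mem_Icc_gamingFloor_iff hc hθ.le).2 ⟨⟨hal, (hl.trans hqθ).le⟩, h⟩).1
    filter_upwards [self_mem_nhdsWithin, nhdsWithin_le_nhds <|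
      continuousAt_const.eventually_lt (hc.continuous_right l).continuousAt hcl,
      nhdsWithin_le_nhds <| lt_mem_nhds (hl.trans hqθ)] with θ' (hθ' : a < θ') hcl' hlθ'
    by_contra! h
    exact hcl'.not_ge ((mem_Icc_gamingFloor_iff hc hθ'.le).1 ⟨h, hlθ'.le⟩).2
  · obtain ⟨x, hqx, hx⟩ := exists_between (lt_min hu hqθ)
    have hcx : c x θ < 1 := (hc.source_between hqx (hx.trans_le (min_le_right _ _))).trans_le
      (cost_gamingFloor_le_one hc hθ.le)
    filter_upwards [self_mem_nhdsWithin, nhdsWithin_le_nhds <|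
      (hc.continuous_right x).continuousAt.eventually_lt continuousAt_const hcx,
      nhdsWithin_le_nhds <| lt_mem_nhds (hx.trans_le (min_le_right _ _))]
      with θ' (hθ' : a < θ') hcx' hxθ'
    exact ((mem_Icc_gamingFloor_iff hc hθ'.le).2
      ⟨⟨(gamingFloor_mem_Icc hc hθ.le).1.trans hqx.le, hxθ'.le⟩, hcx'.le⟩).1.trans_lt
        (hx.trans_le (min_le_left _ _))

theorem gamingFloor_eq_of_cost_eq_one (hc : IsValidCost c) {x : ℝ} (hax : a ≤ x) (hxθ : x < θ)
    (hcx : c x θ = 1) : gamingFloor c a θ = x := by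
  have hθ : a ≤ θ := hax.trans hxθ.le
  refine le_antisymm ((mem_Icc_gamingFloor_iff hc hθ).2 ⟨⟨hax, hxθ.le⟩, hcx.le⟩).1 ?_
  by_contra! h
  exact (hc.source_between h hxθ).not_ge (hcx ▸ cost_gamingFloor_le_one hc hθ)

theorem Qset_eq_Ico (hc : IsValidCost c) {b : ℝ} (hθ : a ≤ θ) (hθb : θ ≤ b) :
    Qset c a b θ = Ico (gamingFloor c a θ) θ := by
  ext x
  constructor
  · rintro ⟨hx, hxθ, hcx⟩
    exact ⟨((mem_Icc_gamingFloor_iff hc hθ).2 ⟨⟨hx.1, hxθ.le⟩, hcx⟩).1, hxθ⟩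
  · rintro ⟨hqx, hxθ⟩
    have hx := (mem_Icc_gamingFloor_iff hc hθ).1 ⟨hqx, hxθ.le⟩
    exact ⟨⟨hx.1.1, hxθ.le.trans hθb⟩, hxθ, hx.2⟩

theorem bestResponse_eq_ite (hc : IsValidCost c) (hθ : a ≤ θ) {x : ℝ} (hx : a ≤ x) :
    bestResponse c θ x = if x ∈ Ico (gamingFloor c a θ) θ then θ else x := by
  rcases le_or_gt θ x with hθx | hxθ
  · simp [bestResponse, hθx]
  have hgame : c x θ ≤ 1 ↔ x ∈ Ico (gamingFloor c a θ) θ := by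
    have := mem_Icc_gamingFloor_iff hc hθ (x := x)
    simp only [mem_Icc, mem_Ico, hx, hxθ, hxθ.le, and_true, true_and] at this ⊢
    exact this.symm
  simp only [bestResponse, if_neg hxθ.not_ge, hgame]

theorem measurable_bestResponse (hc : Measurable fun x => c x θ) :
    Measurable (bestResponse c θ) :=
  Measurable.ite measurableSet_Ici measurable_id <|
    Measurable.ite (measurableSet_le hc measurable_const) measurable_const measurable_id

end gamingFloor

section setAverage

variable {α : Type*} [MeasurableSpace α] {β : Measure α} [IsFiniteMeasure β] {f : α → ℝ}
  {s t : Set α} {C : ℝ}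

theorem lt_setAverage_of_forall_le (hs : MeasurableSet s) (hf : IntegrableOn f s β)
    (hle : ∀ x ∈ s, C ≤ f x) (hts : t ⊆ s) (ht : β t ≠ 0) (hlt : ∀ x ∈ t, C < f x) :
    C < ⨍ x in s, f x ∂β := by
  have hsupport : 0 < β (Function.support (fun x => f x - C) ∩ s) :=
    (pos_iff_ne_zero.2 ht).trans_le <| measure_mono fun x hx =>
      ⟨(sub_pos.2 (hlt x hx)).ne', hts hx⟩
  have hpos := (setIntegral_pos_iff_support_of_nonneg_ae
    (ae_restrict_of_forall_mem hs fun x hx => sub_nonneg.2 (hle x hx))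
    (hf.sub (integrableOn_const (measure_ne_top β s)))).2 hsupport
  have hβs : 0 < β.real s :=
    ENNReal.toReal_pos (fun h => ht (measure_mono_null hts h)) (measure_ne_top β s)
  rw [integral_sub hf (integrableOn_const (measure_ne_top β s)), setIntegral_const, smul_eq_mul,
    sub_pos] at hpos
  rw [setAverage_eq, smul_eq_mul, lt_inv_mul_iff₀ hβs]
  linarith

theorem setAverage_lt_of_forall_le (hs : MeasurableSet s) (hf : IntegrableOn f s β)
    (hle : ∀ x ∈ s, f x ≤ C) (hts : t ⊆ s) (ht : β t ≠ 0) (hlt : ∀ x ∈ t, f x < C) :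
    ⨍ x in s, f x ∂β < C := by
  have := lt_setAverage_of_forall_le (f := fun x => -f x) (C := -C) hs hf.neg
    (fun x hx => neg_le_neg (hle x hx)) hts ht (fun x hx => neg_lt_neg (hlt x hx))
  rwa [average_neg, neg_lt_neg_iff] at this

theorem setIntegral_two_mul_sub_one (hf : IntegrableOn f s β) :
    ∫ x in s, (2 * f x - 1) ∂β = β.real s * (2 * ⨍ x in s, f x ∂β - 1) := by
  rw [integral_sub (hf.const_mul 2) (integrableOn_const (measure_ne_top β s)), integral_const_mul,
    setIntegral_const, ← measure_smul_setAverage f (measure_ne_top β s), smul_eq_mul,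
    smul_eq_mul]
  ring

end setAverage

section Ico

variable {β : Measure ℝ} {f : ℝ → ℝ} {u v : ℝ}

theorem setIntegral_Ico_eq_intervalIntegral [NullSingletonClass β] (huv : u ≤ v) :
    ∫ x in Ico u v, f x ∂β = ∫ x in u..v, f x ∂β := by
  rw [intervalIntegral.integral_of_le huv, integral_Ico_eq_integral_Ioc]

theorem tendsto_setIntegral_Ico_nhdsGT [NullSingletonClass β] (hf : Integrable f β)
    (huv : u ≤ v) :
    Tendsto (fun t => ∫ x in Ico u t, f x ∂β) (𝓝[>] v) (𝓝 (∫ x in Ico u v, f x ∂β)) := by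
  rw [setIntegral_Ico_eq_intervalIntegral huv]
  refine (((hf.continuous_primitive u).tendsto v).mono_left nhdsWithin_le_nhds).congr' ?_
  filter_upwards [self_mem_nhdsWithin] with t (ht : v < t)
  rw [setIntegral_Ico_eq_intervalIntegral (huv.trans ht.le)]

theorem continuousOn_setAverage_Ico [IsFiniteMeasure β] [NullSingletonClass β]
    (hf : Integrable f β) {s : Set ℝ} {l r : ℝ → ℝ} (hl : ContinuousOn l s)
    (hr : ContinuousOn r s) (hlr : ∀ t ∈ s, l t ≤ r t) (hne : ∀ t ∈ s, β (Ico (l t) (r t)) ≠ 0) :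
    ContinuousOn (fun t => ⨍ x in Ico (l t) (r t), f x ∂β) s := by
  have hsub : ∀ {g : ℝ → ℝ}, Integrable g β → ∀ t ∈ s,
      ∫ x in Ico (l t) (r t), g x ∂β = (∫ x in 0..r t, g x ∂β) - ∫ x in 0..l t, g x ∂β :=
    fun hg t ht => by
      rw [setIntegral_Ico_eq_intervalIntegral (hlr t ht),
        intervalIntegral.integral_interval_sub_left hg.intervalIntegrable hg.intervalIntegrable]
  have hcont : ∀ {g : ℝ → ℝ}, Integrable g β →
      ContinuousOn (fun t => (∫ x in 0..r t, g x ∂β) - ∫ x in 0..l t, g x ∂β) s :=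
    fun hg => ((hg.continuous_primitive 0).comp_continuousOn hr).sub
      ((hg.continuous_primitive 0).comp_continuousOn hl)
  have hmass : ∀ t ∈ s, β.real (Ico (l t) (r t)) =
      (∫ x in 0..r t, (1 : ℝ) ∂β) - ∫ x in 0..l t, (1 : ℝ) ∂β := fun t ht => by
    rw [← hsub (integrable_const 1) t ht, setIntegral_const, smul_eq_mul, mul_one]
  refine (((hcont (integrable_const 1)).inv₀ fun t ht => ?_).smul (hcont hf)).congr fun t ht => ?_
  · rw [← hmass t ht]
    exact (ENNReal.toReal_pos (hne t ht) (measure_ne_top β _)).ne'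
  · simp only [setAverage_eq, hmass t ht, hsub hf t ht]
    rfl

variable [IsFiniteMeasure β] {a b : ℝ} (hf : StrictMonoOn f (Icc a b))
  (hfi : IntegrableOn f (Icc a b) β) (hpos : ∀ u v, a ≤ u → u < v → v ≤ b → β (Ioo u v) ≠ 0)
include hf hfi hpos

theorem lt_setAverage_Ico (hu : a ≤ u) (huv : u < v) (hv : v ≤ b) :
    f u < ⨍ x in Ico u v, f x ∂β := by
  have hsub : Ico u v ⊆ Icc a b := Ico_subset_Icc_self.trans (Icc_subset_Icc hu hv)
  exact lt_setAverage_of_forall_le measurableSet_Ico (hfi.mono_set hsub)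
    (fun x hx => hf.monotoneOn ⟨hu, huv.le.trans hv⟩ (hsub hx) hx.1) Ioo_subset_Ico_self
    (hpos u v hu huv hv) (fun x hx => hf ⟨hu, huv.le.trans hv⟩ (hsub (Ioo_subset_Ico_self hx)) hx.1)

theorem setAverage_Ico_lt (hu : a ≤ u) (huv : u < v) (hv : v ≤ b) :
    ⨍ x in Ico u v, f x ∂β < f v := by
  have hsub : Ico u v ⊆ Icc a b := Ico_subset_Icc_self.trans (Icc_subset_Icc hu hv)
  exact setAverage_lt_of_forall_le measurableSet_Ico (hfi.mono_set hsub)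
    (fun x hx => hf.monotoneOn (hsub hx) ⟨hu.trans huv.le, hv⟩ hx.2.le) Ioo_subset_Ico_self
    (hpos u v hu huv hv) (fun x hx => hf (hsub (Ioo_subset_Ico_self hx)) ⟨hu.trans huv.le, hv⟩ hx.2)

theorem setAverage_Ico_mem_Ioo {m : ℝ} (hu : a ≤ u) (hum : u < m) (hmv : m < v) (hv : v ≤ b) :
    ⨍ x in Ico u v, f x ∂β ∈ Ioo (⨍ x in Ico u m, f x ∂β) (⨍ x in Ico m v, f x ∂β) := by
  have hne : ∀ {p q}, a ≤ p → p < q → q ≤ b → β (Ico p q) ≠ 0 := fun hp hpq hq h =>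
    hpos _ _ hp hpq hq (measure_mono_null Ioo_subset_Ico_self h)
  have hint : ∀ {p q}, a ≤ p → q ≤ b → IntegrableOn f (Ico p q) β := fun hp hq =>
    hfi.mono_set (Ico_subset_Icc_self.trans (Icc_subset_Icc hp hq))
  have hseg := average_union_mem_openSegment Ico_disjoint_Ico_same.aedisjoint
    measurableSet_Ico.nullMeasurableSet (hne hu hum (hmv.le.trans hv))
    (hne (hu.trans hum.le) hmv hv) (measure_ne_top β _) (measure_ne_top β _)
    (hint hu (hmv.le.trans hv)) (hint (hu.trans hum.le) hv)
  rwa [Ico_union_Ico_eq_Ico hum.le hmv.le, openSegment_eq_Ioo <|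
    (setAverage_Ico_lt hf hfi hpos hu hum (hmv.le.trans hv)).trans
      (lt_setAverage_Ico hf hfi hpos (hu.trans hum.le) hmv hv)] at hseg

theorem setAverage_Ico_lt_setAverage_Ico {u' v' : ℝ} (hu : a ≤ u) (huu' : u ≤ u') (huv : u < v)
    (hu'v' : u' < v') (hvv' : v < v') (hv' : v' ≤ b) :
    ⨍ x in Ico u v, f x ∂β < ⨍ x in Ico u' v', f x ∂β := by
  rcases le_or_gt v u' with hvu' | hu'v
  · calc ⨍ x in Ico u v, f x ∂β < f v := setAverage_Ico_lt hf hfi hpos hu huv (hvv'.le.trans hv')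
      _ ≤ f u' := hf.monotoneOn ⟨hu.trans huv.le, hvv'.le.trans hv'⟩
          ⟨hu.trans huu', hu'v'.le.trans hv'⟩ hvu'
      _ < ⨍ x in Ico u' v', f x ∂β := lt_setAverage_Ico hf hfi hpos (hu.trans huu') hu'v' hv'
  calc ⨍ x in Ico u v, f x ∂β ≤ ⨍ x in Ico u' v, f x ∂β := by
        rcases huu'.eq_or_lt with rfl | hlt
        · exact le_rfl
        · exact (setAverage_Ico_mem_Ioo hf hfi hpos hu hlt hu'v (hvv'.le.trans hv')).2.le
    _ < ⨍ x in Ico u' v', f x ∂β :=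
        (setAverage_Ico_mem_Ioo hf hfi hpos (hu.trans huu') hu'v hvv' hv').1

end Ico

theorem measure_Ioo_ne_zero_of_mul_le {β : Measure ℝ} {a b m : ℝ} (hm : 0 < m)
    (hmass : ∀ u v, a ≤ u → u ≤ v → v ≤ b → m * (v - u) ≤ β.real (Ioo u v))
    {u v : ℝ} (hu : a ≤ u) (huv : u < v) (hv : v ≤ b) : β (Ioo u v) ≠ 0 := fun h => by
  have := hmass u v hu huv.le hv
  rw [measureReal_def, h, ENNReal.toReal_zero] at this
  nlinarith

theorem ContinuousOn.integrable_of_ae_mem_Icc {β : Measure ℝ} [IsFiniteMeasure β] {f : ℝ → ℝ}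
    {a b : ℝ} (hf : ContinuousOn f (Icc a b)) (hsupp : ∀ᵐ x ∂β, x ∈ Icc a b) : Integrable f β := by
  have := hf.integrableOn_compact (μ := β) isCompact_Icc
  rwa [IntegrableOn, Measure.restrict_eq_self_of_ae_mem hsupp] at this

theorem mul_sub_le_measureReal_Ioo_of_eq_withDensity {β : Measure ℝ} [IsFiniteMeasure β]
    {a b m : ℝ} {g : ℝ → ℝ}
    (hβ : β = (volume.restrict (Icc a b)).withDensity fun x => ENNReal.ofReal (g x))
    (hm : 0 ≤ m) (hg : ∀ x ∈ Icc a b, m ≤ g x) {u v : ℝ} (hu : a ≤ u) (huv : u ≤ v)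
    (hv : v ≤ b) : m * (v - u) ≤ β.real (Ioo u v) := by
  have hsub : Ioo u v ⊆ Icc a b := Ioo_subset_Icc_self.trans (Icc_subset_Icc hu hv)
  rw [measureReal_def, ← ENNReal.toReal_ofReal (mul_nonneg hm (sub_nonneg.2 huv))]
  refine ENNReal.toReal_mono (measure_ne_top _ _) ?_
  rw [hβ, withDensity_apply _ measurableSet_Ioo, Measure.restrict_restrict measurableSet_Ioo,
    inter_eq_self_of_subset_left hsub]
  calc ENNReal.ofReal (m * (v - u)) = ∫⁻ _ in Ioo u v, ENNReal.ofReal m := by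
        rw [setLIntegral_const, Real.volume_Ioo, ENNReal.ofReal_mul hm]
    _ ≤ ∫⁻ x in Ioo u v, ENNReal.ofReal (g x) :=
        setLIntegral_mono' measurableSet_Ioo fun x hx => ENNReal.ofReal_le_ofReal (hg x (hsub hx))

section risk

variable {a : ℝ} {c : ℝ → ℝ → ℝ} {β : Measure ℝ} {μ : ℝ → ℝ}

theorem smRisk_eq_of_mem_Ioc (hc : IsValidCost c) (hsupp : ∀ᵐ x ∂β, a ≤ x) {θ t : ℝ} (hθ : a ≤ θ)
    (ht : t ∈ Ioc (gamingFloor c a θ) θ) : smRisk β μ c θ t = smRisk β μ c θ θ := by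
  refine integral_congr_ae ?_
  filter_upwards [hsupp] with x hx
  obtain ⟨hqt, htθ⟩ := ht
  rw [bestResponse_eq_ite hc hθ hx]
  simp only [mem_Ico]
  grind

variable [IsFiniteMeasure β]

theorem integrable_loss (hc : IsValidCost c) (hμ : Integrable μ β) (θ t : ℝ) :
    Integrable (fun x => if t ≤ bestResponse c θ x then 1 - μ x else μ x) β :=
  Integrable.piecewise (s := {x | t ≤ bestResponse c θ x})
    (measurableSet_le measurable_const (measurable_bestResponse (hc.continuous_left θ).measurable))
    ((integrable_const 1).sub hμ).integrableOn hμ.integrableOn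

theorem smRisk_eq_add_setIntegral (hc : IsValidCost c) (hsupp : ∀ᵐ x ∂β, a ≤ x)
    (hμ : Integrable μ β) {θ t : ℝ} (hθ : a ≤ θ) (hθt : θ < t) :
    smRisk β μ c θ t = smRisk β μ c θ θ + ∫ x in Ico (gamingFloor c a θ) t, (2 * μ x - 1) ∂β := by
  have hg : Integrable (fun x => 2 * μ x - 1) β := (hμ.const_mul 2).sub (integrable_const 1)
  rw [← integral_indicator measurableSet_Ico, smRisk, smRisk,
    ← integral_add (integrable_loss hc hμ θ θ) (hg.indicator measurableSet_Ico)]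
  refine integral_congr_ae ?_
  filter_upwards [hsupp] with x hx
  rw [bestResponse_eq_ite hc hθ hx]
  have hq := (gamingFloor_mem_Icc hc hθ).2
  simp only [indicator, mem_Ico]
  grind

end risk

theorem not_isLocalMinOn_or_hasDerivAt_zero {f : ℝ → ℝ} {a b θ s κ : ℝ} (haθ : a ≤ θ)
    (hθs : θ < s) (hsb : s ≤ b) (hκ : 0 < κ) (hf : ∀ t ∈ Ioc θ s, f t ≤ f θ - κ * (t - θ)) :
    ¬(IsLocalMinOn f (Icc a b) θ ∨ HasDerivAt f 0 θ) := by
  have hright : ∀ᶠ t in 𝓝[>] θ, t ∈ Ioc θ s := Ioc_mem_nhdsGT hθs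
  rintro (hmin | hderiv)
  · have hle : 𝓝[>] θ ≤ 𝓝[Icc a b] θ := by
      rw [← nhdsWithin_Ioc_eq_nhdsGT hθs]
      exact nhdsWithin_mono _ (Ioc_subset_Icc_self.trans (Icc_subset_Icc haθ hsb))
    obtain ⟨t, hmin_t, ht⟩ := ((hmin.filter_mono hle).and hright).exists
    nlinarith [hf t ht, ht.1]
  · have hslope : Tendsto (slope f θ) (𝓝[>] θ) (𝓝 0) :=
      (hasDerivAt_iff_tendsto_slope.1 hderiv).mono_left (nhdsWithin_mono _ fun t ht => ne_of_gt ht)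
    have hle : ∀ᶠ t in 𝓝[>] θ, slope f θ t ≤ -κ := hright.mono fun t ht => by
      rw [slope_def_field, div_le_iff₀ (sub_pos.2 ht.1)]
      linarith [hf t ht]
    linarith [le_of_tendsto hslope hle]

theorem locallyStable_zero_iff {β : Measure ℝ} {μ : ℝ → ℝ} {c : ℝ → ℝ → ℝ} {a b θ : ℝ} :
    LocallyStable β μ c a b 0 θ ↔
      IsLocalMinOn (smRisk β μ c θ) (Icc a b) θ ∨ HasDerivAt (smRisk β μ c θ) 0 θ := by
  simp [LocallyStable, mixRisk]

section stability

variable {a b : ℝ} {c : ℝ → ℝ → ℝ} {β : Measure ℝ} {μ : ℝ → ℝ}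

theorem gam_eq_setAverage (hc : IsValidCost c) {θ : ℝ} (hθ : a ≤ θ) (hθb : θ ≤ b) :
    Gam β μ c a b θ = ⨍ x in Ico (gamingFloor c a θ) θ, μ x ∂β := by
  rw [Gam, Qset_eq_Ico hc hθ hθb, setAverage_eq, smul_eq_mul, div_eq_inv_mul, measureReal_def]

variable [IsFiniteMeasure β]

theorem not_locallyStable_left_endpoint (hc : IsValidCost c) (hsupp : ∀ᵐ x ∂β, a ≤ x)
    (hμ : Integrable μ β) (hμm : MonotoneOn μ (Icc a b)) {m s : ℝ} (hm : 0 < m)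
    (hmass : ∀ t ∈ Icc a b, m * (t - a) ≤ β.real (Ioo a t)) (has : a < s) (hsb : s ≤ b)
    (hμs : μ s < 1 / 2) :
    ¬(IsLocalMinOn (smRisk β μ c a) (Icc a b) a ∨ HasDerivAt (smRisk β μ c a) 0 a) := by
  have hqa : gamingFloor c a a = a := by
    simpa using gamingFloor_mem_Icc hc (le_refl a)
  refine not_isLocalMinOn_or_hasDerivAt_zero le_rfl has hsb
    (mul_pos (by linarith : 0 < 1 - 2 * μ s) hm) fun t ht => ?_
  have hsub : Ico a t ⊆ Icc a b :=
    Ico_subset_Icc_self.trans (Icc_subset_Icc le_rfl (ht.2.trans hsb))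
  have hint : ∫ x in Ico a t, (2 * μ x - 1) ∂β ≤ (2 * μ s - 1) * β.real (Ico a t) := by
    calc ∫ x in Ico a t, (2 * μ x - 1) ∂β ≤ ∫ x in Ico a t, (2 * μ s - 1) ∂β :=
          setIntegral_mono_on ((hμ.const_mul 2).sub (integrable_const 1)).integrableOn
            (integrableOn_const (measure_ne_top _ _)) measurableSet_Ico fun x hx => by
            linarith [hμm (hsub hx) ⟨has.le, hsb⟩ (hx.2.le.trans ht.2)]
      _ = (2 * μ s - 1) * β.real (Ico a t) := by rw [setIntegral_const, smul_eq_mul, mul_comm]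
  have hmass' : m * (t - a) ≤ β.real (Ico a t) :=
    (hmass t ⟨ht.1.le, ht.2.trans hsb⟩).trans (measureReal_mono Ioo_subset_Ico_self)
  rw [smRisk_eq_add_setIntegral hc hsupp hμ le_rfl ht.1, hqa]
  nlinarith

section

variable (hc : IsValidCost c) (hμ : Integrable μ β)
  (hpos : ∀ u v, a ≤ u → u < v → v ≤ b → β (Ioo u v) ≠ 0)
include hc hμ hpos

theorem continuousOn_gam [NullSingletonClass β] : ContinuousOn (Gam β μ c a b) (Ioc a b) := by
  refine (continuousOn_setAverage_Ico hμ ((continuousOn_gamingFloor hc).mono Ioc_subset_Ioi_self)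
    continuousOn_id (fun θ hθ => (gamingFloor_lt hc hθ.1).le) fun θ hθ h => ?_).congr
    fun θ hθ => gam_eq_setAverage hc hθ.1.le hθ.2
  exact hpos _ _ (gamingFloor_mem_Icc hc hθ.1.le).1 (gamingFloor_lt hc hθ.1) hθ.2
    (measure_mono_null Ioo_subset_Ico_self h)

theorem not_locallyStable_of_gam_lt_half [NullSingletonClass β] (hsupp : ∀ᵐ x ∂β, a ≤ x)
    {θ : ℝ} (hθ : θ ∈ Ioo a b) (hgam : Gam β μ c a b θ < 1 / 2) :
    ¬(IsLocalMinOn (smRisk β μ c θ) (Icc a b) θ ∨ HasDerivAt (smRisk β μ c θ) 0 θ) := by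
  have hq := gamingFloor_lt hc hθ.1
  set D := ∫ x in Ico (gamingFloor c a θ) θ, (2 * μ x - 1) ∂β with hD_def
  have hD : D < 0 := by
    have hmass : 0 < β.real (Ico (gamingFloor c a θ) θ) := ENNReal.toReal_pos
      (fun h => hpos _ _ (gamingFloor_mem_Icc hc hθ.1.le).1 hq hθ.2.le
        (measure_mono_null Ioo_subset_Ico_self h)) (measure_ne_top _ _)
    rw [hD_def, setIntegral_two_mul_sub_one hμ.integrableOn,
      ← gam_eq_setAverage hc hθ.1.le hθ.2.le]
    nlinarith
  -- just to the right of `θ`, the gamers of `Q(θ)` fall below the threshold: the risk jumps by `D`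
  have hjump : Tendsto (smRisk β μ c θ) (𝓝[>] θ) (𝓝 (smRisk β μ c θ θ + D)) := by
    have hg : Integrable (fun x => 2 * μ x - 1) β := (hμ.const_mul 2).sub (integrable_const 1)
    refine ((tendsto_setIntegral_Ico_nhdsGT hg hq.le).const_add _).congr' ?_
    filter_upwards [self_mem_nhdsWithin] with t ht
    rw [smRisk_eq_add_setIntegral hc hsupp hμ hθ.1.le ht]
  obtain ⟨s, hs, hsub⟩ := mem_nhdsGT_iff_exists_Ioc_subset.1 <|
    hjump.eventually_lt_const (by linarith : smRisk β μ c θ θ + D < smRisk β μ c θ θ + D / 2)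
  have hθs : θ < min s b := lt_min hs hθ.2
  refine not_isLocalMinOn_or_hasDerivAt_zero hθ.1.le hθs (min_le_right _ _)
    (div_pos (neg_pos.2 hD) (by linarith : 0 < 2 * (min s b - θ))) fun t ht => ?_
  have hlt : smRisk β μ c θ t < smRisk β μ c θ θ + D / 2 :=
    hsub ⟨ht.1, ht.2.trans (min_le_left _ _)⟩
  have hslope : -D / (2 * (min s b - θ)) * (t - θ) ≤ -D / 2 := by
    rw [div_mul_eq_mul_div, div_le_div_iff₀ (by linarith) two_pos]
    nlinarith [ht.2]
  linarith

variable (hμm : StrictMonoOn μ (Icc a b))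
include hμm

theorem strictMonoOn_gam : StrictMonoOn (Gam β μ c a b) (Ioc a b) := by
  intro θ₁ h₁ θ₂ h₂ h₁₂
  rw [gam_eq_setAverage hc h₁.1.le h₁.2, gam_eq_setAverage hc h₂.1.le h₂.2]
  exact setAverage_Ico_lt_setAverage_Ico hμm hμ.integrableOn hpos
    (gamingFloor_mem_Icc hc h₁.1.le).1 (gamingFloor_mono hc h₁.1.le h₂.1.le h₁₂.le)
    (gamingFloor_lt hc h₁.1) (gamingFloor_lt hc h₂.1) h₁₂ h₂.2

theorem exists_gam_eq_half [NullSingletonClass β] {θSL θ' : ℝ} (hθSL : θSL ∈ Ioo a b)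
    (hhalf : μ θSL = 1 / 2) (hθ' : θ' ≤ b) (hSLθ' : θSL < θ') (hcθ' : c θSL θ' = 1) :
    ∃ θ₀ ∈ Ioo θSL θ', Gam β μ c a b θ₀ = 1 / 2 := by
  have hsub : Icc θSL θ' ⊆ Ioc a b := fun θ hθ => ⟨hθSL.1.trans_le hθ.1, hθ.2.trans hθ'⟩
  have hlow : Gam β μ c a b θSL < 1 / 2 := by
    rw [gam_eq_setAverage hc hθSL.1.le hθSL.2.le, ← hhalf]
    exact setAverage_Ico_lt hμm hμ.integrableOn hpos (gamingFloor_mem_Icc hc hθSL.1.le).1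
      (gamingFloor_lt hc hθSL.1) hθSL.2.le
  have hhigh : 1 / 2 < Gam β μ c a b θ' := by
    rw [gam_eq_setAverage hc (hθSL.1.trans hSLθ').le hθ',
      gamingFloor_eq_of_cost_eq_one hc hθSL.1.le hSLθ' hcθ', ← hhalf]
    exact lt_setAverage_Ico hμm hμ.integrableOn hpos hθSL.1.le hSLθ' hθ'
  exact intermediate_value_Ioo hSLθ'.le ((continuousOn_gam hc hμ hpos).mono hsub) ⟨hlow, hhigh⟩

theorem isLocalMinOn_smRisk (hsupp : ∀ᵐ x ∂β, a ≤ x) {θ : ℝ} (hθ : θ ∈ Ioc a b)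
    (hgam : 1 / 2 ≤ Gam β μ c a b θ) : IsLocalMinOn (smRisk β μ c θ) (Icc a b) θ := by
  have hq := gamingFloor_lt hc hθ.1
  filter_upwards [nhdsWithin_le_nhds (lt_mem_nhds hq), self_mem_nhdsWithin] with t hqt ht
  rcases le_or_gt t θ with htθ | hθt
  · rw [smRisk_eq_of_mem_Ioc hc hsupp hθ.1.le ⟨hqt, htθ⟩]
  have havg : 1 / 2 ≤ ⨍ x in Ico (gamingFloor c a θ) t, μ x ∂β := by
    rw [gam_eq_setAverage hc hθ.1.le hθ.2] at hgam
    exact hgam.trans (setAverage_Ico_lt_setAverage_Ico hμm hμ.integrableOn hpos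
      (gamingFloor_mem_Icc hc hθ.1.le).1 le_rfl hq (hq.trans hθt) hθt ht.2).le
  rw [smRisk_eq_add_setIntegral hc hsupp hμ hθ.1.le hθt,
    setIntegral_two_mul_sub_one hμ.integrableOn]
  nlinarith [measureReal_nonneg (μ := β) (s := Ico (gamingFloor c a θ) t)]

end

theorem locallyStable_zero_iff_le [NullSingletonClass β] (hc : IsValidCost c)
    (hsupp : ∀ᵐ x ∂β, a ≤ x) (hμ : Integrable μ β) (hμm : StrictMonoOn μ (Icc a b)) {m : ℝ}
    (hm : 0 < m) (hmass : ∀ u v, a ≤ u → u ≤ v → v ≤ b → m * (v - u) ≤ β.real (Ioo u v))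
    {s θ₀ θ : ℝ} (hs : s ∈ Ioc a b) (hμs : μ s < 1 / 2) (hθ₀ : θ₀ ∈ Ioc a b)
    (hgam₀ : Gam β μ c a b θ₀ = 1 / 2) (hθ : θ ∈ Icc a b) :
    LocallyStable β μ c a b 0 θ ↔ θ₀ ≤ θ := by
  have hpos : ∀ u v, a ≤ u → u < v → v ≤ b → β (Ioo u v) ≠ 0 :=
    fun u v => measure_Ioo_ne_zero_of_mul_le hm hmass
  have hmono := strictMonoOn_gam hc hμ hpos hμm
  rw [locallyStable_zero_iff]
  constructor
  · intro hstable
    by_contra! hθθ₀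
    rcases hθ.1.eq_or_lt with rfl | haθ
    · exact not_locallyStable_left_endpoint hc hsupp hμ hμm.monotoneOn hm
        (fun t ht => hmass a t le_rfl ht.1 ht.2) hs.1 hs.2 hμs hstable
    · exact not_locallyStable_of_gam_lt_half hc hμ hpos hsupp ⟨haθ, hθθ₀.trans_le hθ₀.2⟩
        (hgam₀ ▸ hmono ⟨haθ, hθ.2⟩ hθ₀ hθθ₀) hstable
  · intro hθ₀θ
    have hθ' : θ ∈ Ioc a b := ⟨hθ₀.1.trans_le hθ₀θ, hθ.2⟩
    exact Or.inl <| isLocalMinOn_smRisk hc hμ hpos hμm hsupp hθ'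
      (hgam₀ ▸ hmono.monotoneOn hθ₀ hθ' hθ₀θ)

end stability

theorem stmt3_general
    (a b : ℝ) (hab : a < b)
    (c : ℝ → ℝ → ℝ) (hc_cont : Continuous fun p : ℝ × ℝ => c p.1 p.2)
    (hc_zero : ∀ x, c x x = 0)
    (hc_between : ∀ x xP z : ℝ, min x xP < z → z < max x xP →
      c x z < c x xP ∧ c z x < c xP x)
    (g : ℝ → ℝ) (hg_cont : ContinuousOn g (Icc a b)) (hg_pos : ∀ x ∈ Icc a b, 0 < g x)
    (β : Measure ℝ)
    (hβ : β = (volume.restrict (Icc a b)).withDensity fun x => ENNReal.ofReal (g x))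
    (hβprob : IsProbabilityMeasure β)
    (μ : ℝ → ℝ) (hμ_cont : ContinuousOn μ (Icc a b)) (hμ_mono : StrictMonoOn μ (Icc a b))
    (θSL : ℝ) (hθSL : θSL ∈ Ioo a b) (hhalf : μ θSL = 1/2)
    (hexists : ∃ θ ∈ Icc a b, θSL < θ ∧ c θSL θ = 1) :
    ∃ θ₀ ∈ Ioc a b, Gam β μ c a b θ₀ = 1/2 ∧
      (∀ θ₁ ∈ Ioc a b, Gam β μ c a b θ₁ = 1/2 → θ₁ = θ₀) ∧
      θSL < θ₀ ∧ c θSL θ₀ ≤ 1 ∧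
      ∀ θ ∈ Icc a b, (LocallyStable β μ c a b 0 θ ↔ θ₀ ≤ θ) := by
  obtain ⟨θ', hθ', hSLθ', hcθ'⟩ := hexists
  have hc : IsValidCost c := ⟨hc_cont, hc_zero, hc_between⟩
  have : NullSingletonClass β := hβ ▸ inferInstance
  have hsupp : ∀ᵐ x ∂β, x ∈ Icc a b :=
    hβ ▸ (withDensity_absolutelyContinuous _ _).ae_le (ae_restrict_mem measurableSet_Icc)
  have hμ := hμ_cont.integrable_of_ae_mem_Icc hsupp
  obtain ⟨xmin, hxmin, hmin⟩ := isCompact_Icc.exists_isMinOn (nonempty_Icc.2 hab.le) hg_cont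
  have hmass := fun u v (hu : a ≤ u) (huv : u ≤ v) (hv : v ≤ b) =>
    mul_sub_le_measureReal_Ioo_of_eq_withDensity hβ (hg_pos xmin hxmin).le (fun x hx => hmin hx)
      hu huv hv
  have hpos := fun u v => measure_Ioo_ne_zero_of_mul_le (hg_pos xmin hxmin) hmass (u := u) (v := v)
  obtain ⟨θ₀, hθ₀, hgam₀⟩ := exists_gam_eq_half hc hμ hpos hμ_mono hθSL hhalf hθ'.2 hSLθ' hcθ'
  have hθ₀' : θ₀ ∈ Ioc a b := ⟨hθSL.1.trans hθ₀.1, hθ₀.2.le.trans hθ'.2⟩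
  obtain ⟨s, has, hsSL⟩ := exists_between hθSL.1
  have hμs : μ s < 1 / 2 :=
    hhalf ▸ hμ_mono ⟨has.le, hsSL.le.trans hθSL.2.le⟩ ⟨hθSL.1.le, hθSL.2.le⟩ hsSL
  refine ⟨θ₀, hθ₀', hgam₀, fun θ₁ hθ₁ hgam₁ =>
    (strictMonoOn_gam hc hμ hpos hμ_mono).injOn hθ₁ hθ₀' (hgam₁.trans hgam₀.symm), hθ₀.1,
    (hc.target_between hθ₀.1 hθ₀.2).le.trans hcθ'.le, fun θ hθ => ?_⟩
  exact locallyStable_zero_iff_le hc (hsupp.mono fun x hx => hx.1) hμ hμ_mono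
    (hg_pos xmin hxmin) hmass ⟨has, hsSL.le.trans hθSL.2.le⟩ hμs hθ₀' hgam₀ hθ

/-- Proposition 2(a), case p = 0 (all agents follow standard
microfoundations): the locally stable points form exactly the interval [θ₀, b], where θ₀
is the unique point of (a,b] with Γ(θ₀) = 1/2; in particular stable points exist. -/
theorem stmt3
    (a b : ℝ) (hab : a < b)
    (c : ℝ → ℝ → ℝ) (hc_cont : Continuous fun p : ℝ × ℝ => c p.1 p.2)
    (hc_zero : ∀ x, c x x = 0)
    (hc_between : ∀ x xP z : ℝ, min x xP < z → z < max x xP →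
      c x z < c x xP ∧ c z x < c xP x)
    (g : ℝ → ℝ) (hg_cont : ContinuousOn g (Icc a b)) (hg_pos : ∀ x ∈ Icc a b, 0 < g x)
    (β : Measure ℝ)
    (hβ : β = (volume.restrict (Icc a b)).withDensity fun x => ENNReal.ofReal (g x))
    (hβprob : IsProbabilityMeasure β)
    (μ : ℝ → ℝ) (hμ_cont : ContinuousOn μ (Icc a b)) (hμ_mono : StrictMonoOn μ (Icc a b))
    (hμ_range : ∀ x ∈ Icc a b, μ x ∈ Icc (0:ℝ) 1)
    (θSL : ℝ) (hθSL : θSL ∈ Ioo a b) (hhalf : μ θSL = 1/2)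
    (hexists : ∃ θ ∈ Icc a b, θSL < θ ∧ c θSL θ = 1) :
    ∃ θ₀ ∈ Ioc a b, Gam β μ c a b θ₀ = 1/2 ∧
      (∀ θ₁ ∈ Ioc a b, Gam β μ c a b θ₁ = 1/2 → θ₁ = θ₀) ∧
      θSL < θ₀ ∧ c θSL θ₀ ≤ 1 ∧
      ∀ θ ∈ Icc a b, (LocallyStable β μ c a b 0 θ ↔ θ₀ ≤ θ) :=
  stmt3_general a b hab c hc_cont hc_zero hc_between g hg_cont hg_pos β hβ hβprob μ hμ_cont hμ_mono
    θSL hθSL hhalf hexists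
end

section
/- In the acceptance-rate model, assume the acceptance-rate function q satisfies the downward expenditure constraint and monotonicity. Let θ* ∈ Θ satisfy θ* > θ_SL and c(θ_SL, θ*) = 1 (θ* is the optimal threshold under standard microfoundations). Then for every θ ∈ Θ with θ > θ*, PR(θ*) ≤ PR(θ). In particular, within the class of expenditure-monotone microfoundations, standard microfoundations yield the largest minimal performatively optimal threshold. -/
open MeasureTheory Set

/-- Performative risk of the threshold classifier `1{· ≥ θ}` when an agent with true
features `x` is accepted with probability `q θ x` after strategically responding. -/
noncomputable def PRacc (β : Measure ℝ) (μ : ℝ → ℝ) (q : ℝ → ℝ → ℝ) (θ : ℝ) : ℝ :=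
  ∫ x, (q θ x * (1 - μ x) + (1 - q θ x) * μ x) ∂β

/-- Proposition 3 (formal version): within the class of expenditure-monotone
microfoundations, the optimal threshold under standard microfoundations, i.e. the θ* > θ_SL
with c(θ_SL, θ*) = 1, has performative risk no larger than any larger threshold; hence
standard microfoundations yield the largest minimal performatively optimal threshold. -/
theorem stmt6
    (c : ℝ → ℝ → ℝ) (hc_cont : Continuous fun p : ℝ × ℝ => c p.1 p.2)
    (hc_zero : ∀ x, c x x = 0)
    (hc_between : ∀ x xP z : ℝ, min x xP < z → z < max x xP →
      c x z < c x xP ∧ c z x < c xP x)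
    (β : Measure ℝ) (hβprob : IsProbabilityMeasure β)
    (μ : ℝ → ℝ) (hμ_cont : Continuous μ) (hμ_mono : StrictMono μ)
    (hμ_range : ∀ x, μ x ∈ Icc (0:ℝ) 1)
    (θSL : ℝ) (hhalf : μ θSL = 1/2)
    (Θ : Set ℝ) (q : ℝ → ℝ → ℝ)
    (hq_meas : ∀ θ, Measurable (q θ))
    (hq_range : ∀ θ x, q θ x ∈ Icc (0:ℝ) 1)
    (hq_down : ∀ θ ∈ Θ, ∀ x, x < θ → 1 < c x θ → q θ x = 0)
    (hq_mono : ∀ θ ∈ Θ, ∀ θ' ∈ Θ, θ' ≤ θ → ∀ x, q θ x ≤ q θ' x)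
    (θstar : ℝ) (hθstar : θstar ∈ Θ) (hgt : θSL < θstar) (hcost : c θSL θstar = 1) :
    ∀ θ ∈ Θ, θstar < θ → PRacc β μ q θstar ≤ PRacc β μ q θ := by
  intro θ hθ hlt
  have key : ∀ x, q θstar x * (1 - μ x) + (1 - q θstar x) * μ x ≤
      q θ x * (1 - μ x) + (1 - q θ x) * μ x := by
    intro x
    rcases lt_or_ge x θSL with hx | hx
    · have h1 : 1 < c x θstar := by
        have := (hc_between θstar x θSL (by rw [min_def]; split_ifs <;> linarith)
          (by rw [max_def]; split_ifs <;> linarith)).2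
        linarith [hcost ▸ this]
      have hstar0 : q θstar x = 0 := hq_down θstar hθstar x (by linarith) h1
      have h2 : 1 < c x θ := by
        have := (hc_between x θ θstar (by rw [min_def]; split_ifs <;> linarith)
          (by rw [max_def]; split_ifs <;> linarith)).1
        linarith
      have hθ0 : q θ x = 0 := hq_down θ hθ x (by linarith) h2
      rw [hstar0, hθ0]
    · have hμx : (1:ℝ)/2 ≤ μ x := by
        rcases eq_or_lt_of_le hx with h | h
        · rw [← h, hhalf]
        · linarith [hμ_mono h]
      have hqle : q θ x ≤ q θstar x := hq_mono θ hθ θstar hθstar (le_of_lt hlt) x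
      nlinarith
  have hint : ∀ θ', Integrable (fun x => q θ' x * (1 - μ x) + (1 - q θ' x) * μ x) β := by
    intro θ'
    have hmeas : Measurable (fun x => q θ' x * (1 - μ x) + (1 - q θ' x) * μ x) := by
      have := hq_meas θ'
      have := hμ_cont.measurable
      fun_prop
    refine (integrable_const (1:ℝ)).mono' hmeas.aestronglyMeasurable (ae_of_all _ fun x => ?_)
    have h1 := hq_range θ' x
    have h2 := hμ_range x
    simp only [Real.norm_eq_abs, abs_le]
    constructor <;> nlinarith [h1.1, h1.2, h2.1, h2.2]
  exact integral_mono (hint θstar) (hint θ) key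
end

section
/- Let X be a standard Borel space (a Polish space with its Borel σ-algebra), let D_B be a probability measure on X × {0,1} with no atoms, let Θ be an arbitrary index set, and let D : Θ → ProbabilityMeasures(X × {0,1}) be any map such that for every θ ∈ Θ, D(θ)({(x,y) : y = 1}) = D_B({(x,y) : y = 1}). Then there exist functions T⁰, T¹ : Θ → X → X, with T⁰(θ) and T¹(θ) measurable for each θ, such that for every θ ∈ Θ the pushforward of D_B under (x,y) ↦ (T^y(θ)(x), y) equals D(θ). (Any distribution map preserving the label marginal can be microfounded by agent response functions.) -/
/-!
Split every measure on `X × Bool` into its two label fibres. Since the label marginals of `DB` and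
`D θ` agree, each fibre of `DB` is an atomless finite measure on `X` with the same mass as the
corresponding fibre of `D θ`, so it suffices to push an atomless finite measure on a standard Borel
space onto any other one of equal mass. After normalising, embed `X` into `ℝ`: there the
cumulative distribution function, continuous because there are no atoms, pushes the measure onto
the uniform distribution on `[0, 1]`, and a quantile transform pushes that onto any probability
measure on `X`.
-/

open MeasureTheory ProbabilityTheory Set Filter Topology unitInterval
open scoped ENNReal

namespace ProbabilityTheory

noncomputable def cdfToUnitInterval (μ : Measure ℝ) (a : ℝ) : I :=
  ⟨cdf μ a, cdf_nonneg μ a, cdf_le_one μ a⟩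

lemma measurable_cdfToUnitInterval (μ : Measure ℝ) : Measurable (cdfToUnitInterval μ) :=
  (monotone_cdf μ).measurable.subtype_mk

variable {μ : Measure ℝ} [IsProbabilityMeasure μ] [NullSingletonClass μ]

lemma continuous_cdf : Continuous (cdf μ) := by
  refine continuous_iff_continuousAt.2 fun a ↦
    (monotone_cdf μ).continuousAt_iff_leftLim_eq_rightLim.2 ?_
  have h : (cdf μ).measure {a} = 0 := by rw [measure_cdf]; exact measure_singleton a
  rw [StieltjesFunction.measure_singleton, ENNReal.ofReal_eq_zero, sub_nonpos] at h
  rw [StieltjesFunction.rightLim_eq]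
  exact le_antisymm ((monotone_cdf μ).leftLim_le le_rfl) h

lemma measure_cdf_le {t : ℝ} (ht : t ≤ 1) : μ {a | cdf μ a ≤ t} = ENNReal.ofReal t := by
  rcases ht.eq_or_lt with rfl | ht
  · simp [cdf_le_one]
  set C := {a | cdf μ a ≤ t}
  rcases C.eq_empty_or_nonempty with hC | hC
  · rw [hC, measure_empty, eq_comm, ENNReal.ofReal_eq_zero]
    by_contra! ht0
    obtain ⟨a, ha⟩ := ((tendsto_cdf_atBot μ).eventually (eventually_lt_nhds ht0)).exists
    exact hC.subset ha.le
  have hbdd : BddAbove C := by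
    obtain ⟨b, hb⟩ := ((tendsto_cdf_atTop μ).eventually (eventually_gt_nhds ht)).exists
    exact ⟨b, fun a ha ↦ ((monotone_cdf μ).reflect_lt (ha.trans_lt hb)).le⟩
  have hclosed : IsClosed C := isClosed_le continuous_cdf continuous_const
  have hcC : sSup C ∈ C := hclosed.csSup_mem hC hbdd
  have hCc : C = Iic (sSup C) :=
    Subset.antisymm (fun a ha ↦ le_csSup hbdd ha) fun a ha ↦ (monotone_cdf μ ha).trans hcC
  have hct : cdf μ (sSup C) = t := by
    refine le_antisymm hcC (not_lt.1 fun hlt ↦ ?_)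
    have hright : ∀ᶠ b in 𝓝[>] sSup C, cdf μ b < t :=
      (continuous_cdf.tendsto _).mono_left nhdsWithin_le_nhds |>.eventually (eventually_lt_nhds hlt)
    obtain ⟨b, hbt, hb⟩ := (hright.and self_mem_nhdsWithin).exists
    exact (le_csSup hbdd hbt.le).not_gt hb
  rw [hCc, ← ofReal_cdf, hct]

lemma map_cdfToUnitInterval : μ.map (cdfToUnitInterval μ) = volume := by
  have hmeas := measurable_cdfToUnitInterval μ
  have := Measure.isProbabilityMeasure_map (μ := μ) hmeas.aemeasurable
  refine Measure.ext_of_Iic _ _ fun t ↦ ?_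
  rw [Measure.map_apply hmeas measurableSet_Iic, unitInterval.volume_Iic]
  exact measure_cdf_le t.2.2

end ProbabilityTheory

namespace MeasureTheory

variable {X Y Z : Type*} [MeasurableSpace X] [MeasurableSpace Y] [MeasurableSpace Z]

lemma MeasurableEmbedding.nullSingletonClass_map {f : X → Y} (hf : MeasurableEmbedding f)
    (μ : Measure X) [NullSingletonClass μ] : NullSingletonClass (μ.map f) :=
  ⟨fun y ↦ by
    rw [hf.map_apply]
    exact (subsingleton_singleton.preimage hf.injective).measure_zero μ⟩

lemma MeasurableEmbedding.nullSingletonClass_comap {f : X → Y} (hf : MeasurableEmbedding f)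
    (μ : Measure Y) [NullSingletonClass μ] : NullSingletonClass (μ.comap f) :=
  ⟨fun x ↦ by rw [hf.comap_apply, image_singleton, measure_singleton]⟩

lemma exists_measurable_map_eq_volume_unitInterval [StandardBorelSpace X] (μ : Measure X)
    [IsProbabilityMeasure μ] [NullSingletonClass μ] :
    ∃ g : X → I, Measurable g ∧ μ.map g = volume := by
  have hj := measurableEmbedding_embeddingReal X
  have := Measure.isProbabilityMeasure_map (μ := μ) hj.measurable.aemeasurable
  have : NullSingletonClass (μ.map (embeddingReal X)) := hj.nullSingletonClass_map μ
  have hcdf := measurable_cdfToUnitInterval (μ.map (embeddingReal X))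
  refine ⟨_, hcdf.comp hj.measurable, ?_⟩
  rw [← Measure.map_map hcdf hj.measurable, map_cdfToUnitInterval]

theorem exists_measurable_map_eq_of_isProbabilityMeasure [StandardBorelSpace X]
    (μ ν : Measure X) [IsProbabilityMeasure μ] [NullSingletonClass μ] [IsProbabilityMeasure ν] :
    ∃ f : X → X, Measurable f ∧ μ.map f = ν := by
  have := nonempty_of_isProbabilityMeasure μ
  obtain ⟨g, hg, hgμ⟩ := exists_measurable_map_eq_volume_unitInterval μ
  obtain ⟨h, hh, hhν⟩ := ν.exists_measurable_map_eq
  exact ⟨h ∘ g, hh.comp hg, by rw [← Measure.map_map hh hg, hgμ, hhν]⟩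

theorem exists_measurable_map_eq_of_measure_univ_eq [StandardBorelSpace X]
    (μ ν : Measure X) [IsFiniteMeasure μ] [NullSingletonClass μ] [IsFiniteMeasure ν]
    (h : μ univ = ν univ) : ∃ f : X → X, Measurable f ∧ μ.map f = ν := by
  rcases eq_zero_or_neZero μ with rfl | hμ
  · refine ⟨id, measurable_id, ?_⟩
    rw [Measure.map_id, eq_comm, ← Measure.measure_univ_eq_zero, ← h, Measure.coe_zero,
      Pi.zero_apply]
  have hν : ν univ ≠ 0 := h ▸ NeZero.ne (μ univ)
  have : NeZero ν := ⟨fun h0 ↦ hν (by rw [h0, Measure.coe_zero, Pi.zero_apply])⟩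
  have : NullSingletonClass ((μ univ)⁻¹ • μ) := ⟨fun x ↦ by simp⟩
  obtain ⟨f, hf, hfμ⟩ :=
    exists_measurable_map_eq_of_isProbabilityMeasure ((μ univ)⁻¹ • μ) ((ν univ)⁻¹ • ν)
  refine ⟨f, hf, ?_⟩
  rw [Measure.map_smul, h] at hfμ
  simpa [smul_smul, ENNReal.mul_inv_cancel hν (measure_ne_top ν univ)]
    using congr_arg ((ν univ) • ·) hfμ

section Fiberwise

variable [MeasurableSingletonClass Y]

lemma Measure.comap_prodMk_right_univ (ρ : Measure (X × Y)) (y : Y) :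
    ρ.comap (·, y) univ = ρ {p | p.2 = y} := by
  rw [(measurableEmbedding_prod_mk_right y).comap_apply, image_univ]
  congr 1 with ⟨x, y'⟩
  simp [eq_comm]

variable [Countable Y]

lemma Measure.sum_map_comap_prodMk_right (ρ : Measure (X × Y)) :
    Measure.sum (fun y ↦ (ρ.comap (·, y)).map (·, y)) = ρ := by
  simp_rw [(measurableEmbedding_prod_mk_right _).map_comap]
  have hU : ⋃ y : Y, range (·, y) = (univ : Set (X × Y)) :=
    iUnion_eq_univ_iff.2 fun p ↦ ⟨p.2, p.1, rfl⟩
  rw [← Measure.restrict_iUnion (μ := ρ), hU, Measure.restrict_univ]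
  · refine fun y y' hyy' ↦ disjoint_left.2 ?_
    rintro _ ⟨x, rfl⟩ ⟨x', hx'⟩
    exact hyy' (congrArg Prod.snd hx').symm
  · exact fun y ↦ (measurableEmbedding_prod_mk_right y).measurableSet_range

lemma Measure.map_fiberwise_eq {T : Y → X → Z} (hT : ∀ y, Measurable (T y))
    {μ : Measure (X × Y)} {ν : Measure (Z × Y)}
    (h : ∀ y, (μ.comap (·, y)).map (T y) = ν.comap (·, y)) :
    μ.map (fun p ↦ (T p.2 p.1, p.2)) = ν := by
  have hg : Measurable fun p : X × Y ↦ (T p.2 p.1, p.2) :=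
    (measurable_from_prod_countable_left fun y ↦ hT y).prodMk measurable_snd
  rw [← μ.sum_map_comap_prodMk_right, Measure.map_sum hg.aemeasurable,
    ← ν.sum_map_comap_prodMk_right]
  congr 1 with y : 1
  rw [Measure.map_map hg measurable_prodMk_right, ← h y,
    Measure.map_map measurable_prodMk_right (hT y)]
  rfl

end Fiberwise

end MeasureTheory

/-- Proposition 5 (any distribution map preserving the label marginal can be
microfounded): for a non-atomic base distribution on a standard Borel feature space, there
are per-label response functions T⁰(θ), T¹(θ) whose induced pushforward of the base
distribution realizes the given distribution map. -/
theorem stmt8 {X : Type*} [MeasurableSpace X] [StandardBorelSpace X]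
    (DB : Measure (X × Bool)) [IsProbabilityMeasure DB]
    (hDBatomless : ∀ p : X × Bool, DB {p} = 0)
    {Θ : Type*} (D : Θ → Measure (X × Bool))
    (hDprob : ∀ θ, IsProbabilityMeasure (D θ))
    (hmarg : ∀ θ, D θ {p : X × Bool | p.2 = true} = DB {p : X × Bool | p.2 = true}) :
    ∃ T : Bool → Θ → X → X,
      (∀ y θ, Measurable (T y θ)) ∧
      ∀ θ, Measure.map (fun p : X × Bool => (T p.2 θ p.1, p.2)) DB = D θ := by
  have : NullSingletonClass DB := ⟨hDBatomless⟩
  have hlabel (θ : Θ) (y : Bool) : D θ {p | p.2 = y} = DB {p | p.2 = y} := by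
    have := hDprob θ
    cases y
    · have hS : MeasurableSet {p : X × Bool | p.2 = true} :=
        measurable_snd (measurableSet_singleton true)
      have hc : {p : X × Bool | p.2 = false} = {p | p.2 = true}ᶜ := by ext p; simp
      rw [hc, prob_compl_eq_one_sub hS, prob_compl_eq_one_sub hS, hmarg θ]
    · exact hmarg θ
  have hfiber (θ : Θ) (y : Bool) :
      ∃ f : X → X, Measurable f ∧ (DB.comap (·, y)).map f = (D θ).comap (·, y) := by
    have := hDprob θ
    have := (measurableEmbedding_prod_mk_right y).nullSingletonClass_comap DB
    refine exists_measurable_map_eq_of_measure_univ_eq _ _ ?_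
    rw [Measure.comap_prodMk_right_univ, Measure.comap_prodMk_right_univ, hlabel]
  choose T hT hTmap using hfiber
  exact ⟨fun y θ ↦ T θ y, fun y θ ↦ hT θ y, fun θ ↦ Measure.map_fiberwise_eq (hT θ) (hTmap θ)⟩
end

section
/- In the 1-dimensional noisy response model, assume additionally that there are continuous functions l, u : ℝ → ℝ with l(x) < x < u(x), c(l(x), x) = 1, and c(x, u(x)) = 1 for all x, and that the base distribution D_B on ℝ × {0,1} has, for each label y ∈ {0,1}, a continuous, strictly positive, Lebesgue-integrable density g_y (that is, D_B(A × {y}) = ∫_A g_y dx). Fix σ > 0 and θ ∈ ℝ. Then for each y ∈ {0,1} the measure A ↦ D_σ(θ)(A × {y}) is absolutely continuous with respect to Lebesgue measure, with density p(θ, x', y) = g_y(x') · ν_σ({η ∈ ℝ : η ≤ x' − θ or η > u(x') − θ}) + φ_σ(x' − θ) · ∫_{l(x')}^{x'} g_y(t) dt, where ν_σ is the Gaussian measure N(0,σ²) and φ_σ is its density; moreover p(θ, x', y) is strictly positive and jointly continuous in (θ, x'). -/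
/-!
Under the cost assumptions an agent with features `x` facing a threshold `t > x` moves exactly
when `l t ≤ x`, equivalently when `t ≤ u x`. Writing the perceived threshold as
`t = θ + η ~ N(θ, σ²)`, the preimage of `A × {y}` splits into the agents with features in `A`
who stay (`t ∉ (x, u x]`) and the agents with features in `[l t, t)` who move to a perceived
threshold `t ∈ A`. Fubini's theorem, integrating over `x` for the first piece and over `t` for
the second, produces the two terms of the density. The noisy distribution is finite, so this
density is integrable; its positivity and continuity are read off the formula.
-/

open MeasureTheory Set ProbabilityTheory
open scoped NNReal ENNReal

/-- Response of an agent with features `x` to a perceived threshold `t` (utility of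
positive classification γ = 1). -/
noncomputable def respond (c : ℝ → ℝ → ℝ) (x t : ℝ) : ℝ :=
  if t ≤ x then x else if c x t ≤ 1 then t else x

/-- The noisy-response distribution map in one dimension: the pushforward of the base
distribution tensored with Gaussian perception noise N(0,σ²) under
((x,y),η) ↦ (respond(x, θ+η), y). -/
noncomputable def noisyD (c : ℝ → ℝ → ℝ) (DB : Measure (ℝ × Bool)) (σ θ : ℝ) :
    Measure (ℝ × Bool) :=
  Measure.map (fun q : (ℝ × Bool) × ℝ => (respond c q.1.1 (θ + q.2), q.1.2))
    (DB.prod (gaussianReal 0 ⟨σ ^ 2, sq_nonneg σ⟩))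

/-- The claimed density of the noisy-response distribution at `(x', y)` when the deployed
threshold is `θ`: agents with true features `x'` who keep their features, plus agents in
`[l(x'), x']` who move to the perceived threshold `x'`. -/
noncomputable def nrDens (g : Bool → ℝ → ℝ) (l u : ℝ → ℝ) (σ : ℝ)
    (θ x' : ℝ) (y : Bool) : ℝ :=
  g y x' *
      (gaussianReal 0 ⟨σ ^ 2, sq_nonneg σ⟩ {η : ℝ | η ≤ x' - θ ∨ u x' - θ < η}).toReal +
    gaussianPDFReal 0 ⟨σ ^ 2, sq_nonneg σ⟩ (x' - θ) * ∫ t in (l x')..x', g y t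

theorem continuous_intervalIntegral_of_continuous {α : Type*} [TopologicalSpace α]
    {f : ℝ → ℝ} (hf : Continuous f) {a b : α → ℝ} (ha : Continuous a) (hb : Continuous b) :
    Continuous fun x => ∫ t in a x..b x, f t := by
  have hF : Continuous fun s => ∫ t in (0 : ℝ)..s, f t :=
    intervalIntegral.continuous_primitive (fun _ _ => hf.intervalIntegrable _ _) 0
  refine ((hF.comp hb).sub (hF.comp ha)).congr fun x => ?_
  exact intervalIntegral.integral_interval_sub_left (hf.intervalIntegrable _ _)
    (hf.intervalIntegrable _ _)

theorem continuous_gaussianPDFReal (μ : ℝ) (v : ℝ≥0) : Continuous (gaussianPDFReal μ v) := by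
  unfold gaussianPDFReal
  fun_prop

theorem gaussianReal_compl_Ioc_toReal {μ : ℝ} {v : ℝ≥0} (hv : v ≠ 0) {a b : ℝ}
    (hab : a ≤ b) :
    (gaussianReal μ v (Ioc a b)ᶜ).toReal = 1 - ∫ t in a..b, gaussianPDFReal μ v t := by
  rw [prob_compl_eq_one_sub measurableSet_Ioc,
    ENNReal.toReal_sub_of_le prob_le_one ENNReal.one_ne_top, ENNReal.toReal_one,
    gaussianReal_apply_eq_integral μ hv, intervalIntegral.integral_of_le hab,
    ENNReal.toReal_ofReal (setIntegral_nonneg measurableSet_Ioc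
      fun t _ => gaussianPDFReal_nonneg μ v t)]

theorem continuous_gaussianReal_compl_Ioc_toReal {α : Type*} [TopologicalSpace α] {μ : ℝ}
    {v : ℝ≥0} (hv : v ≠ 0) {a b : α → ℝ} (ha : Continuous a) (hb : Continuous b)
    (hab : ∀ x, a x ≤ b x) :
    Continuous fun x => (gaussianReal μ v (Ioc (a x) (b x))ᶜ).toReal := by
  simp_rw [gaussianReal_compl_Ioc_toReal hv (hab _)]
  exact continuous_const.sub
    (continuous_intervalIntegral_of_continuous (continuous_gaussianPDFReal μ v) ha hb)

theorem setOf_le_or_lt_eq_compl_Ioc (a b : ℝ) : {t : ℝ | t ≤ a ∨ b < t} = (Ioc a b)ᶜ := by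
  ext t
  simp [imp_iff_not_or]

theorem NNReal.mk_sq_ne_zero {σ : ℝ} (hσ : σ ≠ 0) : (⟨σ ^ 2, sq_nonneg σ⟩ : ℝ≥0) ≠ 0 :=
  fun h => hσ (pow_eq_zero_iff two_ne_zero |>.1 (congrArg NNReal.toReal h))

theorem MeasureTheory.Measure.prod_apply_label {α β γ : Type*} [MeasurableSpace α]
    [MeasurableSpace β] [MeasurableSingletonClass β] [MeasurableSpace γ]
    {D : Measure (α × β)} [SFinite D] {μ : Measure α} {ν : Measure γ} [SFinite ν] {y : β}
    (hD : ∀ A, MeasurableSet A → D (A ×ˢ {y}) = μ A) {S : Set (α × γ)} (hS : MeasurableSet S) :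
    D.prod ν {q | q.1.2 = y ∧ (q.1.1, q.2) ∈ S} = μ.prod ν S := by
  have hμ : (D.restrict (univ ×ˢ {y})).map Prod.fst = μ := by
    ext A hA
    rw [Measure.map_apply measurable_fst hA, Measure.restrict_apply (measurable_fst hA),
      ← hD A hA]
    congr 1
    ext
    simp
  have hπ : Measurable (Prod.map Prod.fst id : (α × β) × γ → α × γ) :=
    measurable_fst.prodMap measurable_id
  have hrestrict :
      (D.restrict (univ ×ˢ {y})).prod ν = (D.prod ν).restrict ((univ ×ˢ {y}) ×ˢ univ) := by
    simpa using Measure.prod_restrict (μ := D) (ν := ν) (univ ×ˢ {y}) univ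
  calc D.prod ν {q | q.1.2 = y ∧ (q.1.1, q.2) ∈ S}
      = (D.prod ν).restrict ((univ ×ˢ {y}) ×ˢ univ) (Prod.map Prod.fst id ⁻¹' S) := by
        rw [Measure.restrict_apply (hπ hS)]
        congr 1
        ext
        simp [and_comm, Prod.map]
    _ = ((D.restrict (univ ×ˢ {y})).map Prod.fst).prod (ν.map id) S := by
        rw [Measure.map_prod_map _ _ measurable_fst measurable_id, Measure.map_apply hπ hS,
          hrestrict]
    _ = μ.prod ν S := by rw [hμ, Measure.map_id]

def IsStrictlyMonotoneCost (c : ℝ → ℝ → ℝ) : Prop :=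
  ∀ x xP z : ℝ, min x xP < z → z < max x xP → c x z < c x xP ∧ c z x < c xP x

section Cost

variable {c : ℝ → ℝ → ℝ} {l u : ℝ → ℝ}

theorem cost_le_one_iff_lower_le (hc : IsStrictlyMonotoneCost c) {x t : ℝ} (hl : l t < t)
    (hcl : c (l t) t = 1) (hxt : x < t) :
    c x t ≤ 1 ↔ l t ≤ x := by
  constructor
  · intro h
    by_contra! hx
    linarith [(hc t x (l t) (by simp [hx]) (by simp [hl])).2]
  · intro h
    rcases h.eq_or_lt with rfl | h
    · exact hcl.le
    · linarith [(hc t (l t) x (by simp [h]) (by simp [hxt])).2]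

theorem cost_le_one_iff_le_upper (hc : IsStrictlyMonotoneCost c) {x t : ℝ} (hu : x < u x)
    (hcu : c x (u x) = 1) (hxt : x < t) :
    c x t ≤ 1 ↔ t ≤ u x := by
  constructor
  · intro h
    by_contra! ht
    linarith [(hc x t (u x) (by simp [hu]) (by simp [ht])).1]
  · intro h
    rcases h.eq_or_lt with rfl | h
    · exact hcu.le
    · linarith [(hc x (u x) t (by simp [hxt]) (by simp [h])).1]

theorem respond_eq_ite (hc : IsStrictlyMonotoneCost c) {x t : ℝ} (hl : l t < t)
    (hcl : c (l t) t = 1) :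
    respond c x t = if x ∈ Ico (l t) t then t else x := by
  by_cases hxt : x < t
  · simp [respond, not_le.mpr hxt, cost_le_one_iff_lower_le hc hl hcl hxt, hxt]
  · simp [respond, not_lt.mp hxt, hxt]

theorem mem_Ico_lower_iff_mem_Ioc_upper (hc : IsStrictlyMonotoneCost c) {x t : ℝ}
    (hl : l t < t) (hcl : c (l t) t = 1) (hu : x < u x) (hcu : c x (u x) = 1) :
    x ∈ Ico (l t) t ↔ t ∈ Ioc x (u x) := by
  by_cases hxt : x < t
  · simp only [mem_Ico, mem_Ioc, ← cost_le_one_iff_lower_le hc hl hcl hxt,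
      ← cost_le_one_iff_le_upper hc hu hcu hxt, hxt, and_true, true_and]
  · simp [hxt]

theorem measurable_respond (hc : IsStrictlyMonotoneCost c) (hl : Measurable l)
    (hlt : ∀ t, l t < t) (hcl : ∀ t, c (l t) t = 1) :
    Measurable fun q : (ℝ × Bool) × ℝ => (respond c q.1.1 q.2, q.1.2) := by
  have hresp : Measurable fun p : ℝ × ℝ => respond c p.1 p.2 := by
    simp_rw [respond_eq_ite hc (hlt _) (hcl _)]
    exact Measurable.ite ((measurableSet_le (hl.comp measurable_snd) measurable_fst).inter
      (measurableSet_lt measurable_fst measurable_snd)) measurable_snd measurable_fst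
  exact (hresp.comp (measurable_fst.fst.prodMk measurable_snd)).prodMk measurable_fst.snd

end Cost

/-- A point `p = (x, t)` pairs an agent's features `x` with a perceived threshold `t`. -/
def stayers (u : ℝ → ℝ) : Set (ℝ × ℝ) := {p | p.2 ∉ Ioc p.1 (u p.1)}

def movers (l : ℝ → ℝ) : Set (ℝ × ℝ) := {p | p.1 ∈ Ico (l p.2) p.2}

theorem measurableSet_stayers {u : ℝ → ℝ} (hu : Measurable u) : MeasurableSet (stayers u) :=
  ((measurableSet_lt measurable_fst measurable_snd).inter
    (measurableSet_le measurable_snd (hu.comp measurable_fst))).compl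

theorem measurableSet_movers {l : ℝ → ℝ} (hl : Measurable l) : MeasurableSet (movers l) :=
  (measurableSet_le (hl.comp measurable_snd) measurable_fst).inter
    (measurableSet_lt measurable_fst measurable_snd)

section Response

variable {c : ℝ → ℝ → ℝ} {l u : ℝ → ℝ}

theorem disjoint_stayers_movers (hc : IsStrictlyMonotoneCost c)
    (hlu : ∀ x, l x < x ∧ x < u x ∧ c (l x) x = 1 ∧ c x (u x) = 1) :
    Disjoint (stayers u) (movers l) :=
  disjoint_left.2 fun p hstay hmove => hstay <|
    (mem_Ico_lower_iff_mem_Ioc_upper hc (hlu p.2).1 (hlu p.2).2.2.1 (hlu p.1).2.1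
      (hlu p.1).2.2.2).1 hmove

theorem preimage_respond_eq_union (hc : IsStrictlyMonotoneCost c)
    (hlu : ∀ x, l x < x ∧ x < u x ∧ c (l x) x = 1 ∧ c x (u x) = 1) (A : Set ℝ) (y : Bool) :
    (fun q : (ℝ × Bool) × ℝ => (respond c q.1.1 q.2, q.1.2)) ⁻¹' (A ×ˢ {y}) =
      {q | q.1.2 = y ∧ (q.1.1, q.2) ∈ Prod.fst ⁻¹' A ∩ stayers u} ∪
        {q | q.1.2 = y ∧ (q.1.1, q.2) ∈ Prod.snd ⁻¹' A ∩ movers l} := by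
  ext ⟨⟨x, b⟩, t⟩
  have hmove := mem_Ico_lower_iff_mem_Ioc_upper hc (hlu t).1 (hlu t).2.2.1 (hlu x).2.1
    (hlu x).2.2.2
  simp only [mem_preimage, mem_prod, mem_singleton_iff, mem_union, mem_ofPred_eq, mem_inter_iff,
    stayers, movers, respond_eq_ite hc (hlu t).1 (hlu t).2.2.1]
  split_ifs <;> tauto

theorem prod_stayers_eq_setLIntegral (hu : Measurable u) (μ ν : Measure ℝ) [SFinite ν]
    {A : Set ℝ} (hA : MeasurableSet A) :
    μ.prod ν (Prod.fst ⁻¹' A ∩ stayers u) = ∫⁻ x in A, ν (Ioc x (u x))ᶜ ∂μ := by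
  rw [Measure.prod_apply ((measurable_fst hA).inter (measurableSet_stayers hu)),
    ← lintegral_indicator hA]
  refine lintegral_congr fun x => ?_
  by_cases hx : x ∈ A <;> simp [hx, stayers, preimage, compl_def]

theorem prod_movers_eq_setLIntegral (hl : Measurable l) (μ ν : Measure ℝ) [SFinite μ]
    [SFinite ν] {A : Set ℝ} (hA : MeasurableSet A) :
    μ.prod ν (Prod.snd ⁻¹' A ∩ movers l) = ∫⁻ t in A, μ (Ico (l t) t) ∂ν := by
  rw [Measure.prod_apply_symm ((measurable_snd hA).inter (measurableSet_movers hl)),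
    ← lintegral_indicator hA]
  refine lintegral_congr fun t => ?_
  by_cases ht : t ∈ A <;> simp [ht, movers, preimage, Ico]

theorem map_respond_prod_apply (hc : IsStrictlyMonotoneCost c) (hl : Measurable l)
    (hu : Measurable u) (hlu : ∀ x, l x < x ∧ x < u x ∧ c (l x) x = 1 ∧ c x (u x) = 1)
    {D : Measure (ℝ × Bool)} [SFinite D] {y : Bool} {μ : Measure ℝ} [SFinite μ]
    (hD : ∀ A, MeasurableSet A → D (A ×ˢ {y}) = μ A) (ν : Measure ℝ) [SFinite ν]
    {A : Set ℝ} (hA : MeasurableSet A) :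
    (D.prod ν).map (fun q => (respond c q.1.1 q.2, q.1.2)) (A ×ˢ {y}) =
      ∫⁻ x in A, ν (Ioc x (u x))ᶜ ∂μ + ∫⁻ t in A, μ (Ico (l t) t) ∂ν := by
  have hstay := (measurable_fst hA).inter (measurableSet_stayers hu)
  have hmove := (measurable_snd hA).inter (measurableSet_movers hl)
  have hdisj := disjoint_stayers_movers hc hlu
  rw [Measure.map_apply (measurable_respond hc hl (fun t => (hlu t).1) fun t => (hlu t).2.2.1)
      (hA.prod (measurableSet_singleton y)),
    preimage_respond_eq_union hc hlu, measure_union ?_ ?_, Measure.prod_apply_label hD hstay,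
    Measure.prod_apply_label hD hmove, prod_stayers_eq_setLIntegral hu _ _ hA,
    prod_movers_eq_setLIntegral hl _ _ hA]
  · exact disjoint_left.2 fun q hs hm => disjoint_left.1 hdisj hs.2.2 hm.2.2
  · exact (measurable_fst.snd (measurableSet_singleton y)).inter
      ((measurable_fst.fst.prodMk measurable_snd) hmove)

end Response

instance isFiniteMeasure_noisyD (c : ℝ → ℝ → ℝ) (DB : Measure (ℝ × Bool)) [IsFiniteMeasure DB]
    (σ θ : ℝ) : IsFiniteMeasure (noisyD c DB σ θ) := by
  unfold noisyD
  -- The anonymous constructor elaborates to a `Subtype` term, which instance search does not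
  -- recognise as an `ℝ≥0`; naming it restores the type.
  set v : ℝ≥0 := ⟨σ ^ 2, sq_nonneg σ⟩
  infer_instance

theorem noisyD_eq_map_prod_gaussianReal {c : ℝ → ℝ → ℝ}
    (hresp : Measurable fun q : (ℝ × Bool) × ℝ => (respond c q.1.1 q.2, q.1.2))
    (DB : Measure (ℝ × Bool)) [SFinite DB] (σ θ : ℝ) :
    noisyD c DB σ θ = (DB.prod (gaussianReal θ ⟨σ ^ 2, sq_nonneg σ⟩)).map
      (fun q => (respond c q.1.1 q.2, q.1.2)) := by
  unfold noisyD
  set v : ℝ≥0 := ⟨σ ^ 2, sq_nonneg σ⟩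
  have hshift : DB.prod (gaussianReal θ v) =
      (DB.prod (gaussianReal 0 v)).map (Prod.map id (θ + ·)) := by
    rw [← Measure.map_prod_map _ _ measurable_id (measurable_const_add θ), Measure.map_id,
      gaussianReal_map_const_add, zero_add]
  rw [hshift, Measure.map_map hresp (measurable_id.prodMap (measurable_const_add θ))]
  rfl

theorem gaussianReal_compl_Ioc_eq_ofReal (θ : ℝ) (v : ℝ≥0) (a b : ℝ) :
    gaussianReal θ v (Ioc a b)ᶜ =
      ENNReal.ofReal (gaussianReal 0 v {η | η ≤ a - θ ∨ b - θ < η}).toReal := by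
  rw [ENNReal.ofReal_toReal (measure_ne_top _ _), ← zero_add θ, ← gaussianReal_map_const_add,
    Measure.map_apply (measurable_const_add θ) measurableSet_Ioc.compl, preimage_compl,
    preimage_const_add_Ioc, setOf_le_or_lt_eq_compl_Ioc, zero_add]

theorem gaussianPDF_eq_ofReal_sub (θ : ℝ) (v : ℝ≥0) (x : ℝ) :
    gaussianPDF θ v x = ENNReal.ofReal (gaussianPDFReal 0 v (x - θ)) := by
  rw [gaussianPDFReal_sub, zero_add, gaussianPDF]

theorem withDensity_ofReal_Ico {f : ℝ → ℝ} (hf : Continuous f) (hf0 : ∀ x, 0 ≤ f x) {a b : ℝ}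
    (hab : a ≤ b) :
    volume.withDensity (fun x => ENNReal.ofReal (f x)) (Ico a b) =
      ENNReal.ofReal (∫ x in a..b, f x) := by
  rw [withDensity_apply _ measurableSet_Ico, ← ofReal_integral_eq_lintegral_ofReal
    (hf.integrableOn_Icc.mono_set Ico_subset_Icc_self) (ae_of_all _ hf0),
    intervalIntegral.integral_of_le hab, integral_Ico_eq_integral_Ioc]

section Density

variable {g : Bool → ℝ → ℝ} {l u : ℝ → ℝ} {σ : ℝ} {y : Bool}

theorem ofReal_nrDens (hg : Continuous (g y)) (hg0 : ∀ x, 0 ≤ g y x) {x : ℝ} (hl : l x ≤ x)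
    (θ : ℝ) :
    ENNReal.ofReal (nrDens g l u σ θ x y) =
      ENNReal.ofReal (g y x) * gaussianReal θ ⟨σ ^ 2, sq_nonneg σ⟩ (Ioc x (u x))ᶜ +
        gaussianPDF θ ⟨σ ^ 2, sq_nonneg σ⟩ x *
          volume.withDensity (fun t => ENNReal.ofReal (g y t)) (Ico (l x) x) := by
  rw [nrDens]
  set v : ℝ≥0 := ⟨σ ^ 2, sq_nonneg σ⟩
  rw [gaussianReal_compl_Ioc_eq_ofReal, gaussianPDF_eq_ofReal_sub,
    withDensity_ofReal_Ico hg hg0 hl, ← ENNReal.ofReal_mul (hg0 x),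
    ← ENNReal.ofReal_mul (gaussianPDFReal_nonneg _ _ _),
    ← ENNReal.ofReal_add (mul_nonneg (hg0 x) ENNReal.toReal_nonneg)
      (mul_nonneg (gaussianPDFReal_nonneg _ _ _)
        (intervalIntegral.integral_nonneg hl fun t _ => hg0 t))]

theorem nrDens_pos (hg : Continuous (g y)) (hg_pos : ∀ x, 0 < g y x) {x : ℝ} (hl : l x < x)
    (hσ : σ ≠ 0) (θ : ℝ) : 0 < nrDens g l u σ θ x y :=
  add_pos_of_nonneg_of_pos (mul_nonneg (hg_pos x).le ENNReal.toReal_nonneg)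
    (mul_pos (gaussianPDFReal_pos _ _ _ (NNReal.mk_sq_ne_zero hσ))
      (intervalIntegral.intervalIntegral_pos_of_pos (hg.intervalIntegrable _ _) hg_pos hl))

theorem continuous_nrDens (hg : Continuous (g y)) (hl : Continuous l) (hu : Continuous u)
    (hxu : ∀ x, x < u x) (hσ : σ ≠ 0) :
    Continuous fun p : ℝ × ℝ => nrDens g l u σ p.1 p.2 y := by
  simp only [nrDens, setOf_le_or_lt_eq_compl_Ioc]
  have hescape := continuous_gaussianReal_compl_Ioc_toReal (μ := 0) (NNReal.mk_sq_ne_zero hσ)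
    (α := ℝ × ℝ) (a := fun p => p.2 - p.1) (b := fun p => u p.2 - p.1) (by fun_prop)
    (by fun_prop) fun p => by linarith [hxu p.2]
  have hmass := continuous_intervalIntegral_of_continuous (α := ℝ × ℝ) hg
    (hl.comp continuous_snd) continuous_snd
  exact ((hg.comp continuous_snd).mul hescape).add
    (((continuous_gaussianPDFReal _ _).comp (continuous_snd.sub continuous_fst)).mul hmass)

theorem noisyD_apply_prod_singleton_eq_setLIntegral {c : ℝ → ℝ → ℝ}
    (hc : IsStrictlyMonotoneCost c) (hl : Continuous l) (hu : Continuous u)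
    (hlu : ∀ x, l x < x ∧ x < u x ∧ c (l x) x = 1 ∧ c x (u x) = 1)
    (hg : Continuous (g y)) (hg0 : ∀ x, 0 ≤ g y x) (hg_int : Integrable (g y))
    {DB : Measure (ℝ × Bool)} [SFinite DB]
    (hDB : ∀ A, MeasurableSet A → DB (A ×ˢ {y}) = ENNReal.ofReal (∫ x in A, g y x))
    (hσ : σ ≠ 0) (θ : ℝ) {A : Set ℝ} (hA : MeasurableSet A) :
    noisyD c DB σ θ (A ×ˢ {y}) = ∫⁻ x in A, ENNReal.ofReal (nrDens g l u σ θ x y) := by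
  rw [noisyD_eq_map_prod_gaussianReal (measurable_respond hc hl.measurable (fun t => (hlu t).1)
      fun t => (hlu t).2.2.1)]
  set v : ℝ≥0 := ⟨σ ^ 2, sq_nonneg σ⟩
  have hD : ∀ A, MeasurableSet A →
      DB (A ×ˢ {y}) = volume.withDensity (fun x => ENNReal.ofReal (g y x)) A := fun A hA => by
    rw [hDB A hA, withDensity_apply _ hA,
      ofReal_integral_eq_lintegral_ofReal hg_int.integrableOn (ae_of_all _ hg0)]
  have hstay : ∫⁻ x in A, gaussianReal θ v (Ioc x (u x))ᶜ
        ∂volume.withDensity (fun x => ENNReal.ofReal (g y x)) =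
      ∫⁻ x in A, ENNReal.ofReal (g y x) * gaussianReal θ v (Ioc x (u x))ᶜ :=
    setLIntegral_withDensity_eq_setLIntegral_mul_non_measurable _ hg.measurable.ennreal_ofReal
      _ hA (ae_of_all _ fun _ => ENNReal.ofReal_lt_top)
  have hmove : ∫⁻ t in A, volume.withDensity (fun x => ENNReal.ofReal (g y x)) (Ico (l t) t)
        ∂gaussianReal θ v =
      ∫⁻ t in A, gaussianPDF θ v t *
        volume.withDensity (fun x => ENNReal.ofReal (g y x)) (Ico (l t) t) := by
    rw [gaussianReal_of_var_ne_zero θ (NNReal.mk_sq_ne_zero hσ)]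
    exact setLIntegral_withDensity_eq_setLIntegral_mul_non_measurable _
      (measurable_gaussianPDF θ v) _ hA (ae_of_all _ fun _ => ENNReal.ofReal_lt_top)
  have hstay_meas :
      Measurable fun x => ENNReal.ofReal (g y x) * gaussianReal θ v (Ioc x (u x))ᶜ :=
    hg.measurable.ennreal_ofReal.mul
      (measurable_measure_prodMk_left (measurableSet_stayers hu.measurable))
  rw [map_respond_prod_apply hc hl.measurable hu.measurable hlu hD _ hA, hstay, hmove,
    ← lintegral_add_left hstay_meas]
  exact setLIntegral_congr_fun hA fun x _ => (ofReal_nrDens hg hg0 (hlu x).1.le θ).symm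

end Density

theorem stmt12_general (c : ℝ → ℝ → ℝ)
    (hc_between : ∀ x xP z : ℝ, min x xP < z → z < max x xP →
      c x z < c x xP ∧ c z x < c xP x)
    (l u : ℝ → ℝ) (hl_cont : Continuous l) (hu_cont : Continuous u)
    (hlu : ∀ x, l x < x ∧ x < u x ∧ c (l x) x = 1 ∧ c x (u x) = 1)
    (g : Bool → ℝ → ℝ) (hg_cont : ∀ y, Continuous (g y)) (hg_pos : ∀ y x, 0 < g y x)
    (hg_int : ∀ y, Integrable (g y))
    (DB : Measure (ℝ × Bool)) [IsProbabilityMeasure DB]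
    (hDB : ∀ (y : Bool) (A : Set ℝ), MeasurableSet A →
      DB (A ×ˢ ({y} : Set Bool)) = ENNReal.ofReal (∫ x in A, g y x))
    (σ : ℝ) (hσ : 0 < σ) (θ : ℝ) :
    (∀ (y : Bool) (A : Set ℝ), MeasurableSet A →
      noisyD c DB σ θ (A ×ˢ ({y} : Set Bool)) =
        ENNReal.ofReal (∫ x' in A, nrDens g l u σ θ x' y)) ∧
    (∀ (y : Bool) (ϑ x' : ℝ), 0 < nrDens g l u σ ϑ x' y) ∧
    (∀ y : Bool, Continuous fun p : ℝ × ℝ => nrDens g l u σ p.1 p.2 y) := by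
  have hcont y := continuous_nrDens (hg_cont y) hl_cont hu_cont (fun x => (hlu x).2.1) hσ.ne'
  have hpos y ϑ x' := nrDens_pos (u := u) (hg_cont y) (hg_pos y) (hlu x').1 hσ.ne' ϑ
  refine ⟨fun y A hA => ?_, hpos, hcont⟩
  have hlint := noisyD_apply_prod_singleton_eq_setLIntegral hc_between hl_cont hu_cont hlu
    (hg_cont y) (fun x => (hg_pos y x).le) (hg_int y) (hDB y) hσ.ne' θ hA
  have hnonneg : 0 ≤ᵐ[volume.restrict A] fun x' => nrDens g l u σ θ x' y :=
    ae_of_all _ fun x' => (hpos y θ x').le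
  have hint : IntegrableOn (fun x' => nrDens g l u σ θ x' y) A :=
    (lintegral_ofReal_ne_top_iff_integrable
      ((hcont y).comp (continuous_const.prodMk continuous_id)).aestronglyMeasurable hnonneg).1
      (hlint ▸ measure_ne_top _ _)
  rw [hlint, ofReal_integral_eq_lintegral_ofReal hint hnonneg]

/-- Proposition 8 (noisy response induces a continuous aggregate response):
in the 1-dimensional noisy response model the induced distribution has, for each label, a
strictly positive density w.r.t. Lebesgue measure that is jointly continuous in the
deployed threshold and the features. -/
theorem stmt12 (c : ℝ → ℝ → ℝ) (hc_cont : Continuous fun p : ℝ × ℝ => c p.1 p.2)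
    (hc_zero : ∀ x, c x x = 0)
    (hc_between : ∀ x xP z : ℝ, min x xP < z → z < max x xP →
      c x z < c x xP ∧ c z x < c xP x)
    (l u : ℝ → ℝ) (hl_cont : Continuous l) (hu_cont : Continuous u)
    (hlu : ∀ x, l x < x ∧ x < u x ∧ c (l x) x = 1 ∧ c x (u x) = 1)
    (g : Bool → ℝ → ℝ) (hg_cont : ∀ y, Continuous (g y)) (hg_pos : ∀ y x, 0 < g y x)
    (hg_int : ∀ y, Integrable (g y))
    (DB : Measure (ℝ × Bool)) [IsProbabilityMeasure DB]
    (hDB : ∀ (y : Bool) (A : Set ℝ), MeasurableSet A →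
      DB (A ×ˢ ({y} : Set Bool)) = ENNReal.ofReal (∫ x in A, g y x))
    (σ : ℝ) (hσ : 0 < σ) (θ : ℝ) :
    (∀ (y : Bool) (A : Set ℝ), MeasurableSet A →
      noisyD c DB σ θ (A ×ˢ ({y} : Set Bool)) =
        ENNReal.ofReal (∫ x' in A, nrDens g l u σ θ x' y)) ∧
    (∀ (y : Bool) (ϑ x' : ℝ), 0 < nrDens g l u σ ϑ x' y) ∧
    (∀ y : Bool, Continuous fun p : ℝ × ℝ => nrDens g l u σ p.1 p.2 y) :=
  stmt12_general c hc_between l u hl_cont hu_cont hlu g hg_cont hg_pos hg_int DB hDB σ hσ θ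
end
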